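/- arXiv:1501.01690 — 6 statements merged into one kernel-verified Lean document; each statement's English description precedes it below -/
import Mathlib

section
/- Let G be a locally finite Borel graph on a Polish space X and let f : ℕ → ℕ be any function. Then there is a sequence ⟨Aₙ : n ∈ ℕ⟩ of Borel subsets of X such that A = ⋃ₙ Aₙ is comeager and G-invariant, and for each n any two distinct points x, y ∈ Aₙ satisfy d_G(x, y) > f(n). -/
/-!
By the Lusin–Novikov theorem for Borel sets with finite sections (a consequence of Novikov's
countable separation theorem and a reflection argument), the edges of `G` are covered by the
graphs of countably many Borel maps `e j`, so the points at distance at most `r` from `x` are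
among the images of `x` under the words of length at most `r` in the `e j`. Colouring `x` by a
basic open set that isolates it from these finitely many points gives a Borel colouring `c n`
whose colour classes are `f n`-sparse.

Enumerate the pairs (word `w`, basic open set `k`) by `n`, and let `a n` be a colour that `c n ∘ w`
takes comeagrely on a nonempty open subset of the `k`-th basic open set. Then for every word `w`,
`w⁻¹ (⋃ n, {c n = a n})` is comeagre, so the set `I` of points all of whose images under words lie
in `⋃ n, {c n = a n}` is comeagre, Borel and `G`-invariant; take `A n = {c n = a n} ∩ I`.
-/

open Set Function MeasureTheory Topology Filter PiNat

section Separation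

variable {α : Type*}

def MeasurablySeparableFamily [MeasurableSpace α] (s : ℕ → Set α) : Prop :=
  ∃ u : ℕ → Set α, (∀ n, s n ⊆ u n) ∧ ⋂ n, u n = ∅ ∧ ∀ n, MeasurableSet (u n)

namespace MeasurablySeparableFamily

variable [MeasurableSpace α] {s : ℕ → Set α}

theorem of_disjoint {a b : ℕ} (hab : a ≠ b) {u v : Set α} (hsu : s a ⊆ u) (hsv : s b ⊆ v)
    (huv : Disjoint u v) (hu : MeasurableSet u) (hv : MeasurableSet v) :
    MeasurablySeparableFamily s := by
  refine ⟨fun n => if n = a then u else if n = b then v else univ, fun n => ?_, ?_, fun n => ?_⟩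
  · dsimp only
    split_ifs with ha hb
    exacts [ha ▸ hsu, hb ▸ hsv, subset_univ _]
  · refine eq_empty_of_forall_notMem fun x hx => huv.notMem_of_mem_left (a := x) ?_ ?_
    · simpa using mem_iInter.1 hx a
    · simpa [hab.symm] using mem_iInter.1 hx b
  · dsimp only
    split_ifs
    exacts [hu, hv, .univ]

theorem of_eq_empty {m : ℕ} (hm : s m = ∅) : MeasurablySeparableFamily s :=
  of_disjoint (Nat.succ_ne_self m).symm hm.subset (subset_univ _) (empty_disjoint _)
    .empty .univ

theorem of_forall_update {k : ℕ} {t : ℕ → Set α} (hk : s k ⊆ ⋃ i, t i)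
    (h : ∀ i, MeasurablySeparableFamily (update s k (t i))) : MeasurablySeparableFamily s := by
  choose u hsu hu_empty hu using h
  refine ⟨update (fun n => ⋂ i, u i n) k (⋃ i, u i k), fun n => ?_, ?_, fun n => ?_⟩
  · rcases eq_or_ne n k with rfl | hn
    · simpa using hk.trans (iUnion_mono fun i => by simpa using hsu i n)
    · rw [update_of_ne hn]
      exact subset_iInter fun i => by simpa [hn] using hsu i n
  · refine eq_empty_of_forall_notMem fun x hx => ?_
    obtain ⟨i, hi⟩ := mem_iUnion.1 (by simpa using mem_iInter.1 hx k)
    rw [← mem_empty_iff_false x, ← hu_empty i, mem_iInter]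
    intro n
    rcases eq_or_ne n k with rfl | hn
    · exact hi
    · have hxn := mem_iInter.1 hx n
      rw [update_of_ne hn, mem_iInter] at hxn
      exact hxn i
  · rcases eq_or_ne n k with rfl | hn
    · simpa using .iUnion fun i => hu i n
    · simpa [hn] using .iInter fun i => hu i n

end MeasurablySeparableFamily

end Separation

section Novikov

/-- The `n`-th cylinder is lengthened at the steps `t` with `t.unpair.1 = n`, hence infinitely
often; the centres of the nested cylinders converge to `x n`. -/
theorem exists_seq_forall_mem_cylinder {P : (ℕ → (ℕ → ℕ) × ℕ) → Prop}
    (hP : ∀ s, P s → ∀ k, ∃ y ∈ cylinder (s k).1 (s k).2, P (update s k (y, (s k).2 + 1)))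
    {s₀ : ℕ → (ℕ → ℕ) × ℕ} (h₀ : P s₀) :
    ∃ (s : ℕ → ℕ → (ℕ → ℕ) × ℕ) (x : ℕ → ℕ → ℕ), (∀ t, P (s t)) ∧
      (∀ t n, x n ∈ cylinder (s t n).1 (s t n).2) ∧
      ∀ n, Tendsto (fun t => (s t n).2) atTop atTop := by
  choose! F hF_mem hF using hP
  let next : ℕ → (ℕ → (ℕ → ℕ) × ℕ) → ℕ → (ℕ → ℕ) × ℕ := fun k s =>
    update s k (F s k, (s k).2 + 1)
  let s : ℕ → ℕ → (ℕ → ℕ) × ℕ := fun t => Nat.rec s₀ (fun t s => next t.unpair.1 s) t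
  have hs_succ : ∀ t, s (t + 1) = next t.unpair.1 (s t) := fun _ => rfl
  have hPs : ∀ t, P (s t) := fun t => by
    induction t with
    | zero => exact h₀
    | succ t ih => exact hF _ ih _
  have hnext : ∀ t n, (s (t + 1) n).1 ∈ cylinder (s t n).1 (s t n).2 ∧
      (s t n).2 ≤ (s (t + 1) n).2 := fun t n => by
    rw [hs_succ]
    rcases eq_or_ne n t.unpair.1 with rfl | hn
    · simpa [next] using hF_mem _ (hPs t) _
    · simp [next, hn]
  have hlen_mono : ∀ n, Monotone fun t => (s t n).2 :=
    fun n => monotone_nat_of_le_succ fun t => (hnext t n).2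
  have hnested : ∀ n t t', t ≤ t' → (s t' n).1 ∈ cylinder (s t n).1 (s t n).2 := by
    intro n t t' htt'
    induction t', htt' using Nat.le_induction with
    | base => exact self_mem_cylinder _ _
    | succ t' htt' ih =>
      rw [mem_cylinder_iff_eq] at ih ⊢
      rw [← ih, ← mem_cylinder_iff_eq]
      exact cylinder_anti _ (hlen_mono n htt') (hnext t' n).1
  have hlen : ∀ n, Tendsto (fun t => (s t n).2) atTop atTop := by
    refine fun n => tendsto_atTop_atTop_of_monotone (hlen_mono n) fun L => ?_
    induction L with
    | zero => exact ⟨0, Nat.zero_le _⟩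
    | succ L ih =>
      obtain ⟨t, ht⟩ := ih
      refine ⟨Nat.pair n t + 1, ?_⟩
      have hstep : (s (Nat.pair n t + 1) n).2 = (s (Nat.pair n t) n).2 + 1 := by
        simp [hs_succ, next]
      have : (s t n).2 ≤ (s (Nat.pair n t) n).2 := hlen_mono n (Nat.right_le_pair n t)
      omega
  choose T hT using fun n i => ((hlen n).eventually_gt_atTop i).exists
  refine ⟨s, fun n i => (s (T n i) n).1 i, hPs, fun t n i hi => ?_, hlen⟩
  have h₁ := hnested n t (max t (T n i)) (le_max_left _ _) i hi
  have h₂ := hnested n (T n i) (max t (T n i)) (le_max_right _ _) i (hT n i)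
  exact h₂.symm.trans h₁

theorem Continuous.eventually_image_cylinder_subset {β : Type*} [TopologicalSpace β]
    {g : (ℕ → ℕ) → β} (hg : Continuous g) {x : ℕ → ℕ} {u : Set β} (hu : IsOpen u)
    (hx : g x ∈ u) : ∀ᶠ L in atTop, g '' cylinder x L ⊆ u := by
  obtain ⟨_, ⟨y, L, rfl⟩, hxy, hyu⟩ := (isTopologicalBasis_cylinders fun _ => ℕ)
    |>.exists_subset_of_mem_open (mem_preimage.2 hx) (hu.preimage hg)
  rw [mem_cylinder_iff_eq] at hxy
  filter_upwards [eventually_ge_atTop L] with L' hL'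
  exact image_subset_iff.2 ((cylinder_anti x hL').trans (hxy ▸ hyu))

variable {α : Type*} [TopologicalSpace α] [T2Space α] [MeasurableSpace α] [OpensMeasurableSpace α]

/-- Novikov's separation theorem for ranges of continuous maps on `ℕ → ℕ`. If the images of
cylinders could not be separated at any stage, the shrinking cylinders would converge to points
`x n` with a common image `f n (x n)`, contradicting the emptiness of the intersection. -/
theorem measurablySeparableFamily_range {f : ℕ → (ℕ → ℕ) → α} (hf : ∀ n, Continuous (f n))
    (h : ⋂ n, range (f n) = ∅) : MeasurablySeparableFamily fun n => range (f n) := by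
  by_contra hsep
  let P : (ℕ → (ℕ → ℕ) × ℕ) → Prop := fun s =>
    ¬ MeasurablySeparableFamily fun n => f n '' cylinder (s n).1 (s n).2
  have hP : ∀ s, P s → ∀ k, ∃ y ∈ cylinder (s k).1 (s k).2, P (update s k (y, (s k).2 + 1)) := by
    intro s hs k
    by_contra! H
    refine hs (.of_forall_update (k := k) (t := fun i =>
      f k '' cylinder (update (s k).1 (s k).2 i) ((s k).2 + 1)) ?_ fun i => ?_)
    · rw [← image_iUnion, iUnion_cylinder_update (s k).1 (s k).2]
    · have hi := H _ (update_mem_cylinder _ _ i)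
      simp only [P, not_not] at hi
      convert hi using 2 with n
      rcases eq_or_ne n k with rfl | hn <;> simp [*]
  obtain ⟨s, x, hs, hx, hlen⟩ := exists_seq_forall_mem_cylinder hP (s₀ := fun _ => (0, 0))
    (by simpa [P] using hsep)
  have hs' : ∀ t, ¬ MeasurablySeparableFamily fun n => f n '' cylinder (x n) (s t n).2 := by
    intro t
    simpa [mem_cylinder_iff_eq.1 (hx t _)] using hs t
  have hconst : ∀ a b, f a (x a) = f b (x b) := by
    intro a b
    by_contra hne
    obtain ⟨u, v, hu, hv, hau, hbv, huv⟩ := t2_separation hne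
    obtain ⟨t, hta, htb⟩ :=
      (((hlen a).eventually ((hf a).eventually_image_cylinder_subset hu hau)).and
        ((hlen b).eventually ((hf b).eventually_image_cylinder_subset hv hbv))).exists
    exact hs' t (.of_disjoint (by rintro rfl; exact hne rfl) hta htb huv hu.measurableSet
      hv.measurableSet)
  exact (h ▸ mem_iInter.2 fun n => ⟨x n, hconst n 0⟩ : f 0 (x 0) ∈ (∅ : Set α))

theorem MeasureTheory.AnalyticSet.measurablySeparableFamily {s : ℕ → Set α}
    (hs : ∀ n, AnalyticSet (s n))
    (h : ⋂ n, s n = ∅) : MeasurablySeparableFamily s := by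
  by_cases hempty : ∃ m, s m = ∅
  · exact .of_eq_empty hempty.choose_spec
  push Not at hempty
  choose f hf hfs using fun n => by
    have hsn := hs n
    rw [AnalyticSet] at hsn
    exact hsn.resolve_left (hempty n).ne_empty
  obtain rfl : s = fun n => range (f n) := funext fun n => (hfs n).symm
  exact measurablySeparableFamily_range hf h

end Novikov

theorem MeasureTheory.AnalyticSet.inter {α : Type*} [TopologicalSpace α] [T2Space α]
    {s t : Set α} (hs : AnalyticSet s) (ht : AnalyticSet t) : AnalyticSet (s ∩ t) := by
  rw [inter_eq_iInter]
  exact .iInter fun b => by cases b <;> assumption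

theorem Set.natCast_le_encard_iff {β : Type*} {s : Set β} {N : ℕ} :
    (N : ℕ∞) ≤ s.encard ↔ ∃ v : Fin N → β, Injective v ∧ ∀ i, v i ∈ s := by
  constructor
  · intro h
    obtain ⟨t, hts, ht⟩ := exists_subset_encard_eq h
    have : Finite t := finite_of_encard_eq_coe ht
    have hcard : Nat.card t = N := by
      rw [Nat.card_coe_set_eq, ncard_def, ht, ENat.toNat_natCast]
    let v : Fin N → t := (Finite.equivFin t).symm ∘ Fin.cast hcard.symm
    exact ⟨Subtype.val ∘ v, Subtype.val_injective.comp
      ((Finite.equivFin t).symm.injective.comp (Fin.cast_injective _)), fun i => hts (v i).2⟩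
  · rintro ⟨v, hv, hvs⟩
    calc (N : ℕ∞) = (range v).encard := by
          rw [← image_univ, hv.encard_image, encard_univ, ENat.card_eq_coe_fintype_card,
            Fintype.card_fin]
      _ ≤ s.encard := encard_le_encard (range_subset_iff.2 hvs)

section Sections

variable {α β : Type*} [TopologicalSpace α] [PolishSpace α] [MeasurableSpace α] [BorelSpace α]
  [TopologicalSpace β] [PolishSpace β] [MeasurableSpace β] [BorelSpace β]

theorem MeasurableSet.analyticSet_setOf_natCast_le_encard {R : Set (α × β)}
    (hR : MeasurableSet R) (N : ℕ) : AnalyticSet {x | (N : ℕ∞) ≤ (Prod.mk x ⁻¹' R).encard} := by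
  have hinj : Measurable fun v : Fin N → β => Injective v :=
    Measurable.forall fun a => Measurable.forall fun b =>
      (measurableSet_setOfPred.1 (measurableSet_eq_fun (measurable_pi_apply a)
        (measurable_pi_apply b))).imp measurable_const
  have hmem : Measurable fun p : α × (Fin N → β) => ∀ i, (p.1, p.2 i) ∈ R :=
    Measurable.forall fun i => measurableSet_setOfPred.1 <|
      hR.preimage (measurable_fst.prodMk ((measurable_pi_apply i).comp measurable_snd))
  convert MeasurableSet.analyticSet_image (measurableSet_setOfPred.2
    ((hinj.comp measurable_snd).and hmem)) measurable_fst using 1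
  ext x
  simp [natCast_le_encard_iff]

def sectionRivals (Z : Set (α × β)) : Set (α × β) := {q | ∃ y ∈ Prod.mk q.1 ⁻¹' Z, y ≠ q.2}

theorem MeasureTheory.AnalyticSet.sectionRivals {Z : Set (α × β)} (hZ : AnalyticSet Z) :
    AnalyticSet (sectionRivals Z) := by
  have hne : MeasurableSet {r : (α × β) × β | r.1.2 ≠ r.2} :=
    (measurableSet_eq_fun (measurable_fst.snd) measurable_snd).compl
  convert ((hZ.preimage continuous_fst).inter hne.analyticSet).image_of_continuous
    (continuous_fst.fst.prodMk continuous_snd : Continuous fun r : (α × β) × β => (r.1.1, r.2))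
    using 1
  ext ⟨x, y⟩
  simp only [_root_.sectionRivals, mem_ofPred_eq, mem_preimage, mem_image, mem_inter_iff,
    Prod.exists, Prod.mk.injEq]
  constructor
  · rintro ⟨y', hy', hne⟩
    exact ⟨x, y', y, ⟨hy', hne⟩, rfl, rfl⟩
  · rintro ⟨_, y', _, ⟨hy', hne⟩, rfl, rfl⟩
    exact ⟨y', hy', hne⟩

/-- First reflection: separate `S` from its rivals by a Borel set `B`, then the rivals of `B` from
`S` by a Borel set `C`; the sections of `B \ C` are subsingletons. -/
theorem MeasureTheory.AnalyticSet.exists_measurableSet_superset_subsingleton {S : Set (α × β)}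
    (hS : AnalyticSet S) (h : ∀ x, (Prod.mk x ⁻¹' S).Subsingleton) :
    ∃ D, MeasurableSet D ∧ S ⊆ D ∧ ∀ x, (Prod.mk x ⁻¹' D).Subsingleton := by
  obtain ⟨B, hSB, hB_disj, hB⟩ := hS.measurablySeparable hS.sectionRivals <|
    disjoint_left.2 fun q hq ⟨y, hy, hne⟩ => hne (h q.1 hy hq)
  obtain ⟨C, hC_sub, hC_disj, hC⟩ := hB.analyticSet.sectionRivals.measurablySeparable hS <|
    disjoint_left.2 fun q ⟨y, hy, hne⟩ hq => disjoint_left.1 hB_disj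
      (show (q.1, y) ∈ _root_.sectionRivals S from ⟨q.2, hq, hne.symm⟩) hy
  refine ⟨B \ C, hB.diff hC, fun q hq => ⟨hSB hq, disjoint_left.1 hC_disj hq⟩, ?_⟩
  rintro x y ⟨hyB, hyC⟩ y' ⟨hy'B, -⟩
  by_contra hne
  exact hyC (hC_sub ⟨y', hy'B, Ne.symm hne⟩)

end Sections

section RankAtLeast

variable {α β : Type*}

def rankAtLeast (φ : β → ℝ) (R : Set (α × β)) (N : ℕ) : Set (α × β) :=
  {q ∈ R | (N : ℕ∞) ≤ {y | (q.1, y) ∈ R ∧ φ y < φ q.2}.encard}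

/-- Only the `φ`-largest point of a section with exactly `N + 1` points has rank `N`. -/
theorem rankAtLeast_subsingleton {φ : β → ℝ} (hφ : Injective φ) {R : Set (α × β)} {N : ℕ}
    (hN : ∀ x, (Prod.mk x ⁻¹' R).encard ≤ N + 1) (x : α) :
    (Prod.mk x ⁻¹' rankAtLeast φ R N).Subsingleton := by
  have key : ∀ z z', (x, z) ∈ rankAtLeast φ R N → (x, z') ∈ rankAtLeast φ R N → φ z < φ z' →
      False := by
    rintro z z' ⟨hz, hzN⟩ ⟨hz', -⟩ hlt
    have hsub : insert z' (insert z {y | (x, y) ∈ R ∧ φ y < φ z}) ⊆ Prod.mk x ⁻¹' R := by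
      rintro y (rfl | rfl | ⟨hy, -⟩) <;> assumption
    have := (encard_le_encard hsub).trans (hN x)
    rw [encard_insert_of_notMem, encard_insert_of_notMem] at this
    · have h2 : (N : ℕ∞) + 1 + 1 ≤ N + 1 := by
        calc (N : ℕ∞) + 1 + 1 ≤ {y | (x, y) ∈ R ∧ φ y < φ z}.encard + 1 + 1 := by gcongr
          _ ≤ N + 1 := this
      norm_cast at h2
      omega
    · exact fun h => lt_irrefl _ h.2
    · rintro (h | h)
      · exact hlt.ne (congrArg φ h).symm
      · exact lt_asymm hlt h.2
  intro z hz z' hz'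
  by_contra hne
  rcases (hφ.ne hne).lt_or_gt with h | h
  exacts [key z z' hz hz' h, key z' z hz' hz h]

theorem encard_diff_le_of_rankAtLeast_subset {φ : β → ℝ} (hφ : Injective φ) {R D : Set (α × β)}
    {N : ℕ} (hN : ∀ x, (Prod.mk x ⁻¹' R).encard ≤ N + 1) (hD : rankAtLeast φ R N ⊆ D) (x : α) :
    (Prod.mk x ⁻¹' (R \ D)).encard ≤ N := by
  rcases (hN x).lt_or_eq with hlt | heq
  · exact (encard_le_encard fun y hy => hy.1).trans (Order.le_of_lt_add_one hlt)
  set F := Prod.mk x ⁻¹' R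
  have hfin : F.Finite := finite_of_encard_eq_coe heq
  obtain ⟨z, hz, hzmax⟩ := exists_max_image F φ hfin (by simp [← encard_pos, heq])
  have hbelow : {y | (x, y) ∈ R ∧ φ y < φ z} = F \ {z} := by
    ext y
    simp only [mem_ofPred_eq, Set.mem_sdiff, mem_singleton_iff]
    exact ⟨fun h => ⟨h.1, fun hyz => h.2.ne (congrArg φ hyz)⟩,
      fun h => ⟨h.1, (hzmax y h.1).lt_of_ne fun hφyz => h.2 (hφ hφyz)⟩⟩
  have hF : (F \ {z}).encard = N := by
    have := encard_sdiff_singleton_add_one hz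
    rw [heq] at this
    exact WithTop.add_right_cancel ENat.one_ne_top this
  have hzD : (x, z) ∈ D := hD ⟨hz, by rw [hbelow, hF]⟩
  calc (Prod.mk x ⁻¹' (R \ D)).encard ≤ (F \ {z}).encard :=
        encard_le_encard fun y hy => ⟨hy.1, fun hyz => hy.2 (by rwa [mem_singleton_iff.1 hyz])⟩
    _ = N := hF

end RankAtLeast

section Uniformization

variable {α β : Type*} [TopologicalSpace α] [PolishSpace α] [MeasurableSpace α] [BorelSpace α]
  [TopologicalSpace β] [PolishSpace β] [MeasurableSpace β] [BorelSpace β]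

theorem MeasurableSet.analyticSet_rankAtLeast {φ : β → ℝ} (hφ : Measurable φ)
    {R : Set (α × β)} (hR : MeasurableSet R) (N : ℕ) : AnalyticSet (rankAtLeast φ R N) :=
  hR.analyticSet.inter <| MeasurableSet.analyticSet_setOf_natCast_le_encard (R :=
    {p : (α × β) × β | (p.1.1, p.2) ∈ R ∧ φ p.2 < φ p.1.2})
    ((hR.preimage (measurable_fst.fst.prodMk measurable_snd)).inter
      (measurableSet_lt (hφ.comp measurable_snd) (hφ.comp measurable_fst.snd))) N

/-- Induction on `N`: by reflection, a Borel set with subsingleton sections contains the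
`φ`-largest point of every section of size `N + 1`; removing it leaves sections of size `≤ N`. -/
theorem MeasurableSet.exists_iUnion_eq_of_encard_le {R : Set (α × β)} (hR : MeasurableSet R)
    {N : ℕ} (hN : ∀ x, (Prod.mk x ⁻¹' R).encard ≤ N) :
    ∃ D : ℕ → Set (α × β), (∀ i, MeasurableSet (D i)) ∧
      (∀ i x, (Prod.mk x ⁻¹' D i).Subsingleton) ∧ ⋃ i, D i = R := by
  induction N generalizing R with
  | zero =>
    refine ⟨fun _ => ∅, fun _ => .empty, fun _ _ => by simp, ?_⟩
    rw [iUnion_empty]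
    refine (eq_empty_of_forall_notMem fun q hq => ?_).symm
    have := hN q.1
    simp only [Nat.cast_zero, nonpos_iff_eq_zero, encard_eq_zero] at this
    exact (this ▸ hq : q.2 ∈ (∅ : Set β))
  | succ N ih =>
    obtain ⟨φ, hφ⟩ := exists_measurableEmbedding_real β
    obtain ⟨D, hD, hTD, hD_sub⟩ := (hR.analyticSet_rankAtLeast hφ.measurable N)
      |>.exists_measurableSet_superset_subsingleton (rankAtLeast_subsingleton hφ.injective hN)
    obtain ⟨E, hE, hE_sub, hE_union⟩ := ih (hR.diff hD)
      (encard_diff_le_of_rankAtLeast_subset hφ.injective hN hTD)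
    refine ⟨fun i => Nat.casesOn i (D ∩ R) E, fun i => ?_, fun i x => ?_, ?_⟩
    · cases i
      exacts [hD.inter hR, hE _]
    · cases i
      exacts [(hD_sub x).anti fun y hy => hy.1, hE_sub _ x]
    · rw [← union_iUnion_nat_succ, hE_union]
      exact (congrArg (· ∪ R \ D) (inter_comm D R)).trans (inter_union_sdiff R D)

/-- **Lusin–Novikov** for finite sections. By Novikov's separation theorem, `α` is covered by
Borel sets over which the sections have boundedly many points. -/
theorem MeasurableSet.exists_iUnion_eq_of_finite {R : Set (α × β)} (hR : MeasurableSet R)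
    (hfin : ∀ x, (Prod.mk x ⁻¹' R).Finite) :
    ∃ D : ℕ → Set (α × β), (∀ i, MeasurableSet (D i)) ∧
      (∀ i x, (Prod.mk x ⁻¹' D i).Subsingleton) ∧ ⋃ i, D i = R := by
  obtain ⟨B, hsub, hB_empty, hB⟩ := AnalyticSet.measurablySeparableFamily
    (fun N => hR.analyticSet_setOf_natCast_le_encard (N + 1)) <|
    eq_empty_of_forall_notMem fun x hx => (hfin x).encard_lt_top.not_ge <|
      ENat.forall_natCast_le_iff_le.1 fun N _ =>
        le_trans (by exact_mod_cast N.le_succ) (mem_iInter.1 hx N)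
  have hslice : ∀ N, ∃ D : ℕ → Set (α × β), (∀ i, MeasurableSet (D i)) ∧
      (∀ i x, (Prod.mk x ⁻¹' D i).Subsingleton) ∧ ⋃ i, D i = R ∩ (B N)ᶜ ×ˢ univ := by
    refine fun N => (hR.inter ((hB N).compl.prod .univ)).exists_iUnion_eq_of_encard_le (N := N)
      fun x => ?_
    by_cases hx : x ∈ B N
    · simp [hx]
    · refine (encard_le_encard fun y hy => hy.1).trans (Order.le_of_lt_add_one ?_)
      exact lt_of_not_ge fun h => hx (hsub N (by exact_mod_cast h))
  choose D hD hD_sub hD_union using hslice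
  refine ⟨fun n => D n.unpair.1 n.unpair.2, fun n => hD _ _, fun n => hD_sub _ _, ?_⟩
  rw [iUnion_unpair]
  simp only [hD_union, ← inter_iUnion, ← iUnion_prod_const, ← compl_iInter, hB_empty,
    compl_empty, univ_prod_univ, inter_univ]

theorem MeasurableSet.exists_measurable_eq_of_subsingleton {D : Set (α × β)}
    (hD : MeasurableSet D) (hD_sub : ∀ x, (Prod.mk x ⁻¹' D).Subsingleton) {g : α → β}
    (hg : Measurable g) :
    ∃ e : α → β, Measurable e ∧ (∀ x, (x, e x) ∈ D ∨ e x = g x) ∧ ∀ p ∈ D, e p.1 = p.2 := by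
  have := hD.standardBorel
  let π : D → α := fun q => q.1.1
  have hπ : Injective π := fun q q' hqq' => by
    have hq' : (q.1.1, q'.1.2) ∈ D := by
      rw [show q.1.1 = q'.1.1 from hqq']
      exact q'.2
    exact Subtype.ext (Prod.ext hqq' (hD_sub q.1.1 q.2 hq'))
  have hπm : MeasurableEmbedding π :=
    (measurable_fst.comp measurable_subtype_coe).measurableEmbedding hπ
  refine ⟨extend π (fun q => q.1.2) g, hπm.measurable_extend
    (measurable_snd.comp measurable_subtype_coe) hg, fun x => ?_, fun p hp => ?_⟩
  · by_cases hx : ∃ q, π q = x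
    · obtain ⟨q, rfl⟩ := hx
      left
      rw [hπ.extend_apply]
      exact q.2
    · exact .inr (extend_apply' _ _ _ hx)
  · exact hπ.extend_apply (fun q : D => q.1.2) g ⟨p, hp⟩

end Uniformization

section Coloring

variable {X : Type*} [TopologicalSpace X] [SecondCountableTopology X] [T2Space X]
  [MeasurableSpace X] [OpensMeasurableSpace X]

/-- Colour `x` by the first basic open set that contains `x` and no other point `F i x`. -/
theorem exists_measurable_coloring_of_finite_range {ι : Type*} [Countable ι] {F : ι → X → X}
    (hF : ∀ i, Measurable (F i)) (hfin : ∀ x, (range fun i => F i x).Finite) :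
    ∃ c : X → ℕ, Measurable c ∧ ∀ i x, c (F i x) = c x → F i x = x := by
  classical
  obtain ⟨b, hb⟩ := TopologicalSpace.exists_seq_basis X
  let p : X → ℕ → Prop := fun x k => x ∈ b k ∧ ∀ i, F i x ∈ b k → F i x = x
  have hp : ∀ x, ∃ k, p x k := fun x => by
    obtain ⟨_, ⟨k, rfl⟩, hxk, hk⟩ := hb.exists_subset_of_mem_open
      (by simp : x ∈ ((range fun i => F i x) \ {x})ᶜ) (hfin x).sdiff.isClosed.isOpen_compl
    exact ⟨k, hxk, fun i hi => by_contra fun hne => hk hi ⟨mem_range_self i, hne⟩⟩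
  have hb_meas : ∀ k, MeasurableSet (b k) :=
    fun k => (hb.isOpen (mem_range_self k)).measurableSet
  refine ⟨fun x => Nat.find (hp x), measurable_find hp fun k => ?_, fun i x hix => ?_⟩
  · exact (hb_meas k).inter <| measurableSet_setOfPred.2 <| Measurable.forall fun i =>
      (measurableSet_setOfPred.1 (hF i (hb_meas k))).imp
        (measurableSet_setOfPred.1 (measurableSet_eq_fun (hF i) measurable_id))
  · have hFx := (Nat.find_spec (hp (F i x))).1
    simp only at hix
    rw [hix] at hFx
    exact (Nat.find_spec (hp x)).2 i hFx

end Coloring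

section Baire

variable {X : Type*} [TopologicalSpace X] [BaireSpace X] [MeasurableSpace X] [BorelSpace X]

theorem Measurable.exists_isOpen_eventually_eq {h : X → ℕ} (hh : Measurable h) {V : Set X}
    (hV : IsOpen V) (hne : V.Nonempty) :
    ∃ i, ∃ O ⊆ V, IsOpen O ∧ O.Nonempty ∧ ∀ᶠ x in residual X, x ∈ O → h x = i := by
  obtain ⟨i, hi⟩ : ∃ i, ¬ IsMeagre (h ⁻¹' {i} ∩ V) := by
    by_contra! H
    have hV_eq : ⋃ i, h ⁻¹' {i} ∩ V = V := by ext; simp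
    exact not_isMeagre_of_isOpen hV hne (hV_eq ▸ isMeagre_iUnion H)
  obtain ⟨U, hU, hsU⟩ :=
    ((hh (measurableSet_singleton i)).inter hV.measurableSet).residualEq_isOpen
  have hsO : (h ⁻¹' {i} ∩ V : Set X) =ᵇ (U ∩ V : Set X) := by
    simpa [inter_assoc] using hsU.inter (EventuallyEq.refl _ V)
  refine ⟨i, U ∩ V, inter_subset_right, hU.inter hV, nonempty_iff_ne_empty.2 fun hO => ?_, ?_⟩
  · exact hi (eventuallyEq_empty.1 (hO ▸ hsO))
  · filter_upwards [hsO] with x hx hxO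
    exact (hx.mpr hxO).1

/-- `a k` is a value that `φ k` takes comeagrely on a nonempty open subset of the `k`-th basic open
set; these open subsets have dense union. -/
theorem exists_eventually_exists_eq [SecondCountableTopology X] {φ : ℕ → X → ℕ}
    (hφ : ∀ k, Measurable (φ k)) : ∃ a : ℕ → ℕ, ∀ᶠ x in residual X, ∃ k, φ k x = a k := by
  obtain ⟨b, hb⟩ := TopologicalSpace.exists_seq_basis X
  have : ∀ k, ∃ i, ∃ O ⊆ b k, IsOpen O ∧ ((b k).Nonempty → O.Nonempty) ∧
      ∀ᶠ x in residual X, x ∈ O → φ k x = i := by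
    intro k
    by_cases hk : (b k).Nonempty
    · obtain ⟨i, O, hOb, hO, hOne, hφO⟩ :=
        (hφ k).exists_isOpen_eventually_eq (hb.isOpen (mem_range_self k)) hk
      exact ⟨i, O, hOb, hO, fun _ => hOne, hφO⟩
    · exact ⟨0, ∅, empty_subset _, isOpen_empty, fun h => (hk h).elim, by simp⟩
  choose a O hOb hO hOne hφO using this
  have hdense : Dense (⋃ k, O k) := hb.dense_iff.2 fun _ ⟨k, hk⟩ hne => by
    subst hk
    obtain ⟨x, hx⟩ := hOne k hne
    exact ⟨x, hOb k hx, mem_iUnion.2 ⟨k, hx⟩⟩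
  refine ⟨a, ?_⟩
  filter_upwards [residual_of_dense_open (isOpen_iUnion hO) hdense,
    eventually_countable_forall.2 hφO] with x hx hφx
  obtain ⟨k, hk⟩ := mem_iUnion.1 hx
  exact ⟨k, hφx k hk⟩

end Baire

section Words

variable {X : Type*} (e : ℕ → X → X)

def wordMap (l : List ℕ) (x : X) : X := l.foldr e x

theorem wordMap_append_singleton (l : List ℕ) (j : ℕ) (x : X) :
    wordMap e (l ++ [j]) x = wordMap e l (e j x) := List.foldr_append ..

theorem measurable_wordMap [MeasurableSpace X] {e : ℕ → X → X} (he : ∀ j, Measurable (e j))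
    (l : List ℕ) : Measurable (wordMap e l) := by
  induction l with
  | nil => exact measurable_id
  | cons j l ih => exact (he j).comp ih

variable {e}

theorem SimpleGraph.Walk.exists_wordMap_eq {G : SimpleGraph X}
    (hcover : ∀ x y, G.Adj x y → ∃ j, e j x = y) {x y : X} (p : G.Walk x y) :
    ∃ l : List ℕ, l.length = p.length ∧ wordMap e l x = y := by
  induction p with
  | nil => exact ⟨[], rfl, rfl⟩
  | cons hxy _ ih =>
    obtain ⟨l, hl, hly⟩ := ih
    obtain ⟨j, hj⟩ := hcover _ _ hxy
    exact ⟨l ++ [j], by simp [hl], by rw [wordMap_append_singleton, hj, hly]⟩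

theorem SimpleGraph.finite_range_wordMap (G : SimpleGraph X)
    (hstep : ∀ j x, e j x = x ∨ G.Adj x (e j x)) (hfin : ∀ x, (G.neighborSet x).Finite)
    (r : ℕ) (x : X) :
    (range fun l : {l : List ℕ // l.length ≤ r} => wordMap e l.1 x).Finite := by
  induction r with
  | zero =>
    refine (finite_singleton x).subset ?_
    rintro _ ⟨⟨l, hl⟩, rfl⟩
    rw [Nat.le_zero, List.length_eq_zero_iff] at hl
    subst hl
    rfl
  | succ r ih =>
    refine (ih.biUnion fun y _ => (hfin y).insert y).subset ?_
    rintro _ ⟨⟨l, hl⟩, rfl⟩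
    cases l with
    | nil => exact mem_biUnion ⟨⟨[], Nat.zero_le r⟩, rfl⟩ (mem_insert x _)
    | cons j l =>
      refine mem_biUnion ⟨⟨l, by simpa using hl⟩, rfl⟩ ?_
      show e j (wordMap e l x) ∈ insert (wordMap e l x) _
      rcases hstep j (wordMap e l x) with h | h
      · rw [h]
        exact mem_insert _ _
      · exact mem_insert_of_mem _ h

theorem SimpleGraph.mem_iInter_preimage_wordMap_of_adj (G : SimpleGraph X)
    (hcover : ∀ x y, G.Adj x y → ∃ j, e j x = y) {V : Set X} {x y : X} (hxy : G.Adj x y)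
    (hx : x ∈ ⋂ l, wordMap e l ⁻¹' V) : y ∈ ⋂ l, wordMap e l ⁻¹' V := by
  obtain ⟨j, rfl⟩ := hcover x y hxy
  refine mem_iInter.2 fun l => ?_
  rw [mem_preimage, ← wordMap_append_singleton]
  exact mem_iInter.1 hx (l ++ [j])

end Words

namespace SimpleGraph

variable {X : Type*} [TopologicalSpace X] [PolishSpace X] [MeasurableSpace X] [BorelSpace X]
  (G : SimpleGraph X)

theorem exists_measurable_adj_cover (hG : MeasurableSet {p : X × X | G.Adj p.1 p.2})
    (hfin : ∀ x, (G.neighborSet x).Finite) :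
    ∃ e : ℕ → X → X, (∀ j, Measurable (e j)) ∧ (∀ j x, e j x = x ∨ G.Adj x (e j x)) ∧
      ∀ x y, G.Adj x y → ∃ j, e j x = y := by
  obtain ⟨D, hD, hD_sub, hD_union⟩ := hG.exists_iUnion_eq_of_finite hfin
  choose e he he_mem he_eq using fun j =>
    (hD j).exists_measurable_eq_of_subsingleton (hD_sub j) measurable_id
  refine ⟨e, he, fun j x => (he_mem j x).symm.imp_right fun h => ?_, fun x y hxy => ?_⟩
  · exact hD_union.subset (mem_iUnion_of_mem j h)
  · have hxy' : (x, y) ∈ {p : X × X | G.Adj p.1 p.2} := hxy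
    obtain ⟨j, hj⟩ := mem_iUnion.1 (hD_union.symm.subset hxy')
    exact ⟨j, he_eq j _ hj⟩

variable {G} {e : ℕ → X → X}

theorem exists_measurable_coloring_lt_length (he : ∀ j, Measurable (e j))
    (hstep : ∀ j x, e j x = x ∨ G.Adj x (e j x)) (hcover : ∀ x y, G.Adj x y → ∃ j, e j x = y)
    (hfin : ∀ x, (G.neighborSet x).Finite) (r : ℕ) :
    ∃ c : X → ℕ, Measurable c ∧ ∀ x y, c x = c y → x ≠ y → ∀ p : G.Walk x y, r < p.length := by
  obtain ⟨c, hc, hc_ne⟩ := exists_measurable_coloring_of_finite_range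
    (F := fun l : {l : List ℕ // l.length ≤ r} => wordMap e l.1)
    (fun l => measurable_wordMap he l.1) (G.finite_range_wordMap hstep hfin r)
  refine ⟨c, hc, fun x y hxy hne p => lt_of_not_ge fun hp => ?_⟩
  obtain ⟨l, hl, rfl⟩ := p.exists_wordMap_eq hcover
  exact hne (hc_ne ⟨l, hl ▸ hp⟩ x hxy.symm).symm

end SimpleGraph

/-- **Lemma (Marks–Unger).** If `G` is a locally finite Borel graph on a Polish space `X` and
`f : ℕ → ℕ`, then there are Borel sets `Aₙ ⊆ X` whose union `A = ⋃ₙ Aₙ` is comeager and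
`G`-invariant, such that any two distinct points of `Aₙ` have `G`-distance greater than `f n`
(i.e., every `G`-walk between them has length greater than `f n`). -/
theorem comeager_sparse_decomposition {X : Type*} [TopologicalSpace X] [PolishSpace X]
    [MeasurableSpace X] [BorelSpace X]
    (G : SimpleGraph X)
    (hGBorel : MeasurableSet {p : X × X | G.Adj p.1 p.2})
    (hlocfin : ∀ x : X, (G.neighborSet x).Finite)
    (f : ℕ → ℕ) :
    ∃ A : ℕ → Set X,
      (∀ n, MeasurableSet (A n)) ∧
      (⋃ n, A n) ∈ residual X ∧
      (∀ x y : X, G.Adj x y → (x ∈ ⋃ n, A n ↔ y ∈ ⋃ n, A n)) ∧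
      (∀ n, ∀ x ∈ A n, ∀ y ∈ A n, x ≠ y → ∀ p : G.Walk x y, f n < p.length) := by
  obtain ⟨e, he, hstep, hcover⟩ := G.exists_measurable_adj_cover hGBorel hlocfin
  choose c hc hc_sparse using fun n =>
    SimpleGraph.exists_measurable_coloring_lt_length he hstep hcover hlocfin (f n)
  let ν : ℕ ≃ List ℕ × ℕ := (Denumerable.eqv (List ℕ × ℕ)).symm
  choose a ha using fun l : List ℕ => exists_eventually_exists_eq
    (φ := fun k => c (ν.symm (l, k)) ∘ wordMap e l) fun k => (hc _).comp (measurable_wordMap he l)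
  let S : ℕ → Set X := fun n => {x | c n x = a (ν n).1 (ν n).2}
  let I : Set X := ⋂ l, wordMap e l ⁻¹' ⋃ n, S n
  have hI : ⋃ n, S n ∩ I = I := by
    rw [← iUnion_inter]
    exact inter_eq_right.2 (iInter_subset (fun l => wordMap e l ⁻¹' ⋃ n, S n) [])
  refine ⟨fun n => S n ∩ I, fun n => ?_, ?_, fun x y hxy => ?_, ?_⟩
  · exact (measurableSet_eq_fun (hc n) measurable_const).inter <| .iInter fun l =>
      measurable_wordMap he l <| .iUnion fun n => measurableSet_eq_fun (hc n) measurable_const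
  · rw [hI]
    refine countable_iInter_mem.2 fun l => (ha l).mono fun x ⟨k, hk⟩ => ?_
    exact mem_iUnion.2 ⟨ν.symm (l, k), by simpa [S] using hk⟩
  · rw [hI]
    exact ⟨G.mem_iInter_preimage_wordMap_of_adj hcover hxy,
      G.mem_iInter_preimage_wordMap_of_adj hcover hxy.symm⟩
  · rintro n x ⟨hx, -⟩ y ⟨hy, -⟩
    exact hc_sparse n x y (hx.trans hy.symm)
end

section
/- Suppose G is a 2-regular acyclic Borel bipartite graph on a Polish space X with Borel bipartition {B₀, B₁}, let n ≥ 1, and let Gₙ be the Borel graph on X with x Gₙ y if and only if there is a G-path of odd length at most 2n − 1 from x to y. If Y is a Gₙ-invariant Borel set such that Gₙ ↾ Y has a Borel perfect matching, then G ↾ Y has a Borel perfect matching. -/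
/-- `M` is a perfect matching of the induced graph `G ↾ A`, viewed as a symmetric set of
edges (ordered pairs) such that every vertex of `A` is incident to exactly one edge of `M`. -/
def IsPerfectMatchingOn {X : Type*} (G : SimpleGraph X) (A : Set X) (M : Set (X × X)) : Prop :=
  (∀ p ∈ M, p.1 ∈ A ∧ p.2 ∈ A ∧ G.Adj p.1 p.2) ∧
  (∀ x y : X, (x, y) ∈ M ↔ (y, x) ∈ M) ∧
  (∀ x ∈ A, ∃! y : X, (x, y) ∈ M)

/-!
Every component of `G` is a bi-infinite line. Select an edge of `G` when an odd number of
`Gₙ`-matched pairs straddle it, i.e. have their connecting path through it. At a vertex `x`, the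
pair containing `x` straddles exactly one of the two edges at `x`, and any other pair straddling
one of them straddles both; so exactly one edge at `x` is selected. Matched pairs are at distance
less than `2n`, so the straddle count of an arc only looks at finitely many iterates of the
non-backtracking successor map on arcs, which is Borel; hence the selected edges form a Borel set.
-/

open Function

/-- Each shifted double sum is the unshifted one minus a boundary line, the far boundary lines
vanish, and the two near boundary lines add up to `1`. -/
theorem odd_sum_sum_shift_add (q : ℕ → ℕ → ℕ) (R : ℕ) (hqR : ∀ a, q a R = 0)
    (hRq : ∀ b, q R b = 0)
    (h₀ : ∑ b ∈ Finset.range R, q 0 b + ∑ a ∈ Finset.range R, q a 0 = 1) :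
    Odd (∑ a ∈ Finset.range R, ∑ b ∈ Finset.range R, q a (b + 1) +
      ∑ a ∈ Finset.range R, ∑ b ∈ Finset.range R, q (a + 1) b) := by
  set T := ∑ a ∈ Finset.range R, ∑ b ∈ Finset.range R, q a b
  have h₁ : ∑ a ∈ Finset.range R, ∑ b ∈ Finset.range R, q a (b + 1) +
      ∑ a ∈ Finset.range R, q a 0 = T := by
    rw [← Finset.sum_add_distrib]
    refine Finset.sum_congr rfl fun a _ ↦ ?_
    rw [← Finset.sum_range_succ', Finset.sum_range_succ, hqR, add_zero]
  have h₂ : ∑ a ∈ Finset.range R, ∑ b ∈ Finset.range R, q (a + 1) b +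
      ∑ b ∈ Finset.range R, q 0 b = T := by
    rw [← Finset.sum_range_succ' (fun a ↦ ∑ b ∈ Finset.range R, q a b), Finset.sum_range_succ,
      Finset.sum_eq_zero fun b _ ↦ hRq b, add_zero]
  exact ⟨T - 1, by omega⟩

theorem measurable_of_measurableSet_graph {α β : Type*} [MeasurableSpace α]
    [StandardBorelSpace α] [MeasurableSpace β] [StandardBorelSpace β] {f : α → β}
    (hf : MeasurableSet {p : α × β | p.2 = f p.1}) : Measurable f := by
  intro B hB
  have hpre : f ⁻¹' B = Prod.fst '' ({p : α × β | p.2 = f p.1} ∩ Prod.snd ⁻¹' B) := by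
    ext a
    refine ⟨fun ha ↦ ⟨(a, f a), ⟨rfl, ha⟩, rfl⟩, ?_⟩
    rintro ⟨⟨a, b⟩, ⟨hb, hbB⟩, rfl⟩
    exact (show b = f a from hb) ▸ hbB
  rw [hpre]
  refine (hf.inter (measurable_snd hB)).image_of_measurable_injOn measurable_fst ?_
  rintro ⟨a, b⟩ ⟨hb, -⟩ ⟨a', b'⟩ ⟨hb', -⟩ (rfl : a = a')
  exact Prod.ext rfl (hb.trans hb'.symm)

namespace SimpleGraph

variable {X : Type*} {G : SimpleGraph X}

theorem exists_adj_ne_of_ncard_neighborSet_eq_two (hreg : ∀ x, (G.neighborSet x).ncard = 2)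
    {w x : X} (hx : G.Adj w x) : ∃ z, G.Adj w z ∧ z ≠ x := by
  have : (G.neighborSet w \ {x}).ncard ≠ 0 := by
    rw [Set.ncard_sdiff_singleton_of_mem (G.mem_neighborSet w x |>.mpr hx), hreg]; decide
  obtain ⟨z, hz, hzx⟩ := Set.nonempty_of_ncard_ne_zero this
  exact ⟨z, hz, hzx⟩

theorem eq_of_adj_of_ne_of_ncard_neighborSet_eq_two (hreg : ∀ x, (G.neighborSet x).ncard = 2)
    {w x z z' : X} (hx : G.Adj w x) (hz : G.Adj w z) (hz' : G.Adj w z')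
    (hzx : z ≠ x) (hz'x : z' ≠ x) : z = z' := by
  by_contra hzz'
  have hfin : (G.neighborSet w).Finite := Set.finite_of_ncard_ne_zero (by rw [hreg]; decide)
  have h3 : ({x, z, z'} : Set X).ncard = 3 :=
    Set.ncard_eq_three.mpr ⟨x, z, z', hzx.symm, hz'x.symm, hzz', rfl⟩
  have : ({x, z, z'} : Set X).ncard ≤ 2 := by
    rw [← hreg w]
    refine Set.ncard_le_ncard ?_ hfin
    rintro _ (rfl | rfl | rfl) <;> assumption
  omega

/-- Arcs (directed edges) as a subtype of `X × X`, so that they carry the induced Borel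
structure. -/
abbrev Arc (G : SimpleGraph X) := {p : X × X // G.Adj p.1 p.2}

variable (hreg : ∀ x, (G.neighborSet x).ncard = 2)

namespace Arc

def reverse (e : G.Arc) : G.Arc := ⟨e.1.swap, e.2.symm⟩

@[simp] theorem reverse_reverse (e : G.Arc) : e.reverse.reverse = e := rfl

noncomputable def next (e : G.Arc) : G.Arc :=
  ⟨(e.1.2, (exists_adj_ne_of_ncard_neighborSet_eq_two hreg e.2.symm).choose),
    (exists_adj_ne_of_ncard_neighborSet_eq_two hreg e.2.symm).choose_spec.1⟩

theorem next_snd_ne (e : G.Arc) : (next hreg e).1.2 ≠ e.1.1 :=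
  (exists_adj_ne_of_ncard_neighborSet_eq_two hreg e.2.symm).choose_spec.2

theorem eq_next {e f : G.Arc} (h₁ : f.1.1 = e.1.2) (h₂ : f.1.2 ≠ e.1.1) : f = next hreg e := by
  have hf : G.Adj e.1.2 f.1.2 := h₁ ▸ f.2
  exact Subtype.ext <| Prod.ext h₁ <| eq_of_adj_of_ne_of_ncard_neighborSet_eq_two hreg
    e.2.symm hf (next hreg e).2 h₂ (next_snd_ne hreg e)

theorem next_reverse_next (e : G.Arc) : next hreg (next hreg e).reverse = e.reverse :=
  (eq_next hreg rfl fun h ↦ next_snd_ne hreg e h.symm).symm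

theorem iterate_next_reverse_iterate_next (e : G.Arc) (k : ℕ) :
    (next hreg)^[k] ((next hreg)^[k] e).reverse = e.reverse := by
  induction k with
  | zero => rfl
  | succ k ih => rw [iterate_succ_apply, iterate_succ_apply', next_reverse_next, ih]

theorem eq_or_eq_next_reverse {e f : G.Arc} (h : f.1.1 = e.1.1) :
    f = e ∨ f = next hreg e.reverse := by
  by_cases h₂ : f.1.2 = e.1.2
  · exact .inl (Subtype.ext (Prod.ext h h₂))
  · exact .inr (eq_next hreg h h₂)

noncomputable def ray (e : G.Arc) (k : ℕ) : X := ((next hreg)^[k] e).1.1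

theorem ray_add (e : G.Arc) (k m : ℕ) : ray hreg e (k + m) = ray hreg ((next hreg)^[m] e) k := by
  rw [ray, ray, iterate_add_apply]

noncomputable def rayWalk : (e : G.Arc) → (k : ℕ) → G.Walk e.1.1 (ray hreg e k)
  | _, 0 => .nil
  | e, k + 1 => .cons e.2 (rayWalk (next hreg e) k)

@[simp] theorem length_rayWalk (e : G.Arc) (k : ℕ) : (rayWalk hreg e k).length = k := by
  induction k generalizing e with
  | zero => rfl
  | succ k ih => exact congrArg (· + 1) (ih _)

theorem support_rayWalk (e : G.Arc) (k : ℕ) :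
    (rayWalk hreg e k).support = (List.range (k + 1)).map (ray hreg e) := by
  induction k generalizing e with
  | zero => rfl
  | succ k ih =>
    change e.1.1 :: (rayWalk hreg (next hreg e) k).support = _
    rw [ih, List.range_succ_eq_map (n := k + 1), List.map_cons, List.map_map]
    rfl

theorem isChain_edges_rayWalk (e : G.Arc) (k : ℕ) :
    (rayWalk hreg e k).edges.IsChain (· ≠ ·) := by
  induction k generalizing e with
  | zero => exact List.IsChain.nil
  | succ k ih =>
    cases k with
    | zero => exact List.isChain_singleton _
    | succ k =>
      change (s(e.1.1, e.1.2) :: s(e.1.2, (next hreg e).1.2) ::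
        (rayWalk hreg (next hreg (next hreg e)) k).edges).IsChain _
      refine List.isChain_cons_cons.mpr ⟨?_, ih (next hreg e)⟩
      rw [Ne, Sym2.eq_iff]
      rintro (⟨h, -⟩ | ⟨h, -⟩)
      exacts [e.2.ne h, next_snd_ne hreg e h.symm]

theorem isPath_rayWalk (hac : G.IsAcyclic) (e : G.Arc) (k : ℕ) : (rayWalk hreg e k).IsPath :=
  (hac.isPath_iff_isChain _).mpr (isChain_edges_rayWalk hreg e k)

theorem ray_injective (hac : G.IsAcyclic) (e : G.Arc) : Injective (ray hreg e) := by
  intro a b hab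
  have h := (isPath_rayWalk hreg hac e (max a b)).support_nodup
  rw [support_rayWalk] at h
  exact List.inj_on_of_nodup_map h (List.mem_range.mpr (by omega))
    (List.mem_range.mpr (by omega)) hab

theorem eq_ray_of_isPath {x y : X} (p : G.Walk x y) (hp : p.IsPath) (e : G.Arc)
    (hx : e.1.1 = x) (hsnd : p.snd = e.1.2) : y = ray hreg e p.length := by
  induction p generalizing e with
  | nil => exact absurd (hx.trans hsnd) e.2.ne
  | @cons u v w h q ih =>
    rw [Walk.snd_cons] at hsnd
    subst hsnd hx
    by_cases hq : q.Nil
    · rw [Walk.length_cons, hq.length_eq_zero]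
      exact hq.eq.symm
    · have hu : q.snd ≠ e.1.1 := fun h ↦
        (Walk.cons_isPath_iff _ _).mp hp |>.2 (h ▸ q.getVert_mem_support 1)
      have hnext : (⟨(e.1.2, q.snd), q.adj_snd hq⟩ : G.Arc) = next hreg e := eq_next hreg rfl hu
      exact ih hp.of_cons (next hreg e) rfl (congrArg (·.1.2) hnext)

theorem length_eq_of_isPath_ray_ray (hac : G.IsAcyclic) (e : G.Arc) (a b : ℕ)
    {p : G.Walk (ray hreg (next hreg e.reverse) a) (ray hreg e b)} (hp : p.IsPath) :
    p.length = a + b := by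
  -- the ray of `f` runs from `ray (next e.reverse) a` back to `e.1.1` and then along the ray of `e`
  set f := ((next hreg)^[a] e.reverse).reverse
  have h₀ : f.1.1 = ray hreg (next hreg e.reverse) a := by
    change ((next hreg)^[a] e.reverse).1.2 = ((next hreg)^[a] (next hreg e.reverse)).1.1
    rw [← iterate_succ_apply, iterate_succ_apply']
    rfl
  have h₁ : ray hreg f (b + a) = ray hreg e b := by
    rw [ray_add, iterate_next_reverse_iterate_next]
    rfl
  have hpf : p = (rayWalk hreg f (b + a)).copy h₀ h₁ := congrArg Subtype.val <|
    (hac.subsingleton_path _ _).elim ⟨p, hp⟩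
      ⟨_, (Walk.isPath_copy _ _ _).mpr (isPath_rayWalk hreg hac f (b + a))⟩
  rw [hpf, Walk.length_copy, length_rayWalk, add_comm]

theorem ray_next_reverse_ne_ray (hac : G.IsAcyclic) (e : G.Arc) (a : ℕ) {b : ℕ} (hb : 0 < b) :
    ray hreg (next hreg e.reverse) a ≠ ray hreg e b := fun h ↦ by
  have := length_eq_of_isPath_ray_ray hreg hac e a b (p := Walk.nil.copy rfl h) (by simp)
  simp at this
  omega

open Classical in
/-- The number of pairs of `M` whose connecting path passes through the arc `e` and has fewer than
`R` vertices on each side of `e`. -/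
noncomputable def crossCount (M : Set (X × X)) (R : ℕ) (e : G.Arc) : ℕ :=
  ∑ i ∈ Finset.range R, ∑ j ∈ Finset.range R,
    if (ray hreg (next hreg e.reverse) i, ray hreg e (j + 1)) ∈ M then 1 else 0

theorem crossCount_reverse {M : Set (X × X)} (hM : ∀ x y, (x, y) ∈ M → (y, x) ∈ M) (R : ℕ)
    (e : G.Arc) : crossCount hreg M R e.reverse = crossCount hreg M R e := by
  classical
  rw [crossCount, crossCount, Finset.sum_comm]
  refine Finset.sum_congr rfl fun i _ ↦ Finset.sum_congr rfl fun j _ ↦ ?_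
  exact if_congr ⟨hM _ _, hM _ _⟩ rfl rfl

theorem odd_crossCount_add_crossCount_of_partner_eq_ray (hac : G.IsAcyclic)
    {M : Set (X × X)} (hMsymm : ∀ x y, (x, y) ∈ M → (y, x) ∈ M) {R : ℕ}
    (hM : ∀ x y, (x, y) ∈ M → ∃ p : G.Walk x y, p.IsPath ∧ p.length < R)
    (e : G.Arc) {L : ℕ} (hL : 0 < L) (hLR : L < R)
    (hpartner : ∀ y, (e.1.1, y) ∈ M ↔ y = ray hreg e L) :
    Odd (crossCount hreg M R e + crossCount hreg M R (next hreg e.reverse)) := by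
  classical
  set e' := next hreg e.reverse
  have hfar : ∀ a b, (ray hreg e' a, ray hreg e b) ∈ M → a + b < R := fun a b h ↦ by
    obtain ⟨p, hp, hpR⟩ := hM _ _ h
    rwa [length_eq_of_isPath_ray_ray hreg hac e a b hp] at hpR
  -- `q a b`: are the vertices at distance `a` behind and `b` ahead of `e.1.1` matched?
  set q : ℕ → ℕ → ℕ := fun a b ↦ if (ray hreg e' a, ray hreg e b) ∈ M then 1 else 0
  have hcount : crossCount hreg M R e' =
      ∑ a ∈ Finset.range R, ∑ b ∈ Finset.range R, q (a + 1) b := by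
    rw [crossCount, next_reverse_next, Finset.sum_comm]
    refine Finset.sum_congr rfl fun i _ ↦ Finset.sum_congr rfl fun j _ ↦ ?_
    exact if_congr ⟨hMsymm _ _, hMsymm _ _⟩ rfl rfl
  rw [hcount]
  refine odd_sum_sum_shift_add q R (fun a ↦ if_neg fun h ↦ ?_) (fun b ↦ if_neg fun h ↦ ?_) ?_
  · exact absurd (hfar a R h) (by omega)
  · exact absurd (hfar R b h) (by omega)
  have hright : ∀ b, q 0 b = if b = L then 1 else 0 := fun b ↦
    if_congr ((hpartner _).trans (ray_injective hreg hac e).eq_iff) rfl rfl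
  have hleft : ∀ a, q a 0 = 0 := fun a ↦ if_neg fun h ↦
    ray_next_reverse_ne_ray hreg hac e a hL ((hpartner _).mp (hMsymm _ _ h))
  simp only [hright, hleft, Finset.sum_ite_eq', Finset.mem_range, hLR, if_true,
    Finset.sum_const_zero, add_zero]

theorem odd_crossCount_add_crossCount (hac : G.IsAcyclic)
    {M : Set (X × X)} (hMsymm : ∀ x y, (x, y) ∈ M → (y, x) ∈ M) {R : ℕ}
    (hM : ∀ x y, (x, y) ∈ M → ∃ p : G.Walk x y, p.IsPath ∧ 0 < p.length ∧ p.length < R)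
    (e : G.Arc) (hx : ∃! y, (e.1.1, y) ∈ M) :
    Odd (crossCount hreg M R e + crossCount hreg M R (next hreg e.reverse)) := by
  obtain ⟨y, hy, huniq⟩ := hx
  obtain ⟨p, hp, hpos, hpR⟩ := hM _ _ hy
  have hM' : ∀ x y, (x, y) ∈ M → ∃ p : G.Walk x y, p.IsPath ∧ p.length < R := fun x y h ↦
    (hM x y h).imp fun _ h ↦ ⟨h.1, h.2.2⟩
  set e₀ : G.Arc := ⟨(e.1.1, p.snd), p.adj_snd (Walk.not_nil_iff_lt_length.mpr hpos)⟩
  have hpartner : ∀ y', (e₀.1.1, y') ∈ M ↔ y' = ray hreg e₀ p.length := fun y' ↦ by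
    rw [← eq_ray_of_isPath hreg p hp e₀ rfl rfl]
    exact ⟨huniq y', fun h ↦ h ▸ hy⟩
  rcases eq_or_eq_next_reverse hreg (e := e) (f := e₀) rfl with he | he
  · rw [← he]
    exact odd_crossCount_add_crossCount_of_partner_eq_ray hreg hac hMsymm hM' e₀ hpos hpR hpartner
  · have := odd_crossCount_add_crossCount_of_partner_eq_ray hreg hac hMsymm hM' e₀ hpos hpR
      hpartner
    rwa [he, next_reverse_next, reverse_reverse, add_comm] at this

end Arc

open Arc

noncomputable def oddCrossingEdges (Y : Set X) (M : Set (X × X)) (R : ℕ) : Set (X × X) :=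
  Subtype.val '' {e : G.Arc | e.1.1 ∈ Y ∧ Odd (crossCount hreg M R e)}

theorem existsUnique_mem_oddCrossingEdges {Y : Set X} {M : Set (X × X)} {R : ℕ} (e : G.Arc)
    (hY : e.1.1 ∈ Y) (hodd : Odd (crossCount hreg M R e))
    (heven : ¬ Odd (crossCount hreg M R (next hreg e.reverse))) :
    ∃! y, (e.1.1, y) ∈ oddCrossingEdges hreg Y M R := by
  refine ⟨e.1.2, ⟨e, ⟨hY, hodd⟩, rfl⟩, ?_⟩
  rintro y ⟨f, ⟨-, hfodd⟩, hfy⟩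
  have hfe : f.1.1 = e.1.1 := by rw [hfy]
  rcases eq_or_eq_next_reverse hreg hfe with rfl | rfl
  · exact (congrArg Prod.snd hfy).symm
  · contradiction

theorem isPerfectMatchingOn_oddCrossingEdges (hac : G.IsAcyclic) {Y : Set X}
    (hY : ∀ x y, G.Adj x y → (x ∈ Y ↔ y ∈ Y)) {M : Set (X × X)}
    (hMsymm : ∀ x y, (x, y) ∈ M → (y, x) ∈ M) {R : ℕ}
    (hM : ∀ x y, (x, y) ∈ M → ∃ p : G.Walk x y, p.IsPath ∧ 0 < p.length ∧ p.length < R)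
    (hMY : ∀ x ∈ Y, ∃! y, (x, y) ∈ M) :
    IsPerfectMatchingOn G Y (oddCrossingEdges hreg Y M R) := by
  have hsymm : ∀ x y, (x, y) ∈ oddCrossingEdges hreg Y M R →
      (y, x) ∈ oddCrossingEdges hreg Y M R := by
    rintro x y ⟨(e : G.Arc), ⟨hx, hodd⟩, he⟩
    refine ⟨e.reverse, ⟨(hY _ _ e.2).mp hx, (crossCount_reverse hreg hMsymm R e).symm ▸ hodd⟩, ?_⟩
    simp [reverse, he]
  refine ⟨?_, fun x y ↦ ⟨hsymm x y, hsymm y x⟩, fun x hx ↦ ?_⟩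
  · rintro _ ⟨e, ⟨hx, -⟩, rfl⟩
    exact ⟨hx, (hY _ _ e.2).mp hx, e.2⟩
  obtain ⟨z, hz⟩ := Set.nonempty_of_ncard_ne_zero (s := G.neighborSet x) (by rw [hreg]; decide)
  set e : G.Arc := ⟨(x, z), hz⟩
  have hpar := odd_crossCount_add_crossCount hreg hac hMsymm hM e (hMY x hx)
  rcases Nat.even_or_odd (crossCount hreg M R e) with heven | hodd
  · refine existsUnique_mem_oddCrossingEdges hreg (next hreg e.reverse) hx
      ((Nat.odd_add'.mp hpar).mpr heven) ?_
    rwa [next_reverse_next, reverse_reverse, Nat.not_odd_iff_even]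
  · exact existsUnique_mem_oddCrossingEdges hreg e hx hodd
      (Nat.not_odd_iff_even.mpr ((Nat.odd_add.mp hpar).mp hodd))

namespace Arc

variable [MeasurableSpace X]

theorem measurable_reverse : Measurable (reverse : G.Arc → G.Arc) :=
  (measurable_swap.comp measurable_subtype_coe).subtype_mk

variable [StandardBorelSpace X] (hG : MeasurableSet {p : X × X | G.Adj p.1 p.2})
include hG

theorem measurable_next : Measurable (next hreg) := by
  have : StandardBorelSpace G.Arc := hG.standardBorel
  refine measurable_of_measurableSet_graph ?_
  have hgraph : {p : G.Arc × G.Arc | p.2 = next hreg p.1} =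
      {p | p.2.1.1 = p.1.1.2} \ {p | p.2.1.2 = p.1.1.1} := by
    ext ⟨e, f⟩
    refine ⟨fun (h : f = next hreg e) ↦ ?_, fun h ↦ eq_next hreg h.1 h.2⟩
    subst h
    exact ⟨rfl, next_snd_ne hreg e⟩
  rw [hgraph]
  exact (measurableSet_eq_fun (by fun_prop) (by fun_prop)).diff
    (measurableSet_eq_fun (by fun_prop) (by fun_prop))

theorem measurable_ray (k : ℕ) : Measurable fun e ↦ ray hreg e k :=
  (measurable_fst.comp measurable_subtype_coe).comp ((measurable_next hreg hG).iterate k)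

theorem measurable_crossCount {M : Set (X × X)} (hM : MeasurableSet M) (R : ℕ) :
    Measurable (crossCount hreg M R) := by
  classical
  refine Finset.measurable_sum _ fun i _ ↦ Finset.measurable_sum _ fun j _ ↦
    Measurable.ite ?_ measurable_const measurable_const
  have hback : Measurable fun e : G.Arc ↦ ray hreg (next hreg e.reverse) i :=
    (measurable_ray hreg hG i).comp ((measurable_next hreg hG).comp measurable_reverse)
  exact (hback.prodMk (measurable_ray hreg hG (j + 1))) hM

end Arc

theorem measurableSet_oddCrossingEdges [MeasurableSpace X] [StandardBorelSpace X]
    (hG : MeasurableSet {p : X × X | G.Adj p.1 p.2}) {Y : Set X} (hY : MeasurableSet Y)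
    {M : Set (X × X)} (hM : MeasurableSet M) (R : ℕ) :
    MeasurableSet (oddCrossingEdges hreg Y M R) :=
  (MeasurableEmbedding.subtype_coe hG).measurableSet_image.mpr <|
    (measurable_fst.comp measurable_subtype_coe hY).inter
      (measurable_crossCount hreg hG hM R (MeasurableSet.of_discrete (s := {k : ℕ | Odd k})))

end SimpleGraph

theorem two_regular_matching_lemma_general {X : Type*} [TopologicalSpace X] [PolishSpace X]
    [MeasurableSpace X] [BorelSpace X]
    (G : SimpleGraph X)
    (hGBorel : MeasurableSet {p : X × X | G.Adj p.1 p.2})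
    (hreg : ∀ x : X, (G.neighborSet x).ncard = 2)
    (hacyclic : G.IsAcyclic)
    (n : ℕ) (hn : 1 ≤ n)
    (Gn : SimpleGraph X)
    (hGn : ∀ x y : X, Gn.Adj x y ↔
      ∃ p : G.Walk x y, p.IsPath ∧ Odd p.length ∧ p.length ≤ 2 * n - 1)
    (Y : Set X)
    (hYBorel : MeasurableSet Y)
    (hYinv : ∀ x y : X, Gn.Adj x y → (x ∈ Y ↔ y ∈ Y))
    (hmatchGn : ∃ M : Set (X × X), MeasurableSet M ∧ IsPerfectMatchingOn Gn Y M) :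
    ∃ M : Set (X × X), MeasurableSet M ∧ IsPerfectMatchingOn G Y M := by
  obtain ⟨M, hMBorel, hMY, hMsymm, hMunique⟩ := hmatchGn
  have hGY : ∀ x y, G.Adj x y → (x ∈ Y ↔ y ∈ Y) := fun x y h ↦
    hYinv x y <| (hGn x y).mpr ⟨.cons h .nil, by simp [h.ne], by simp, by simp; omega⟩
  have hM : ∀ x y, (x, y) ∈ M → ∃ p : G.Walk x y, p.IsPath ∧ 0 < p.length ∧ p.length < 2 * n :=
    fun x y h ↦ by
      obtain ⟨p, hp, hodd, hle⟩ := (hGn x y).mp (hMY _ h).2.2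
      exact ⟨p, hp, hodd.pos, by omega⟩
  exact ⟨_, SimpleGraph.measurableSet_oddCrossingEdges hreg hGBorel hYBorel hMBorel (2 * n),
    SimpleGraph.isPerfectMatchingOn_oddCrossingEdges hreg hacyclic hGY
      (fun x y ↦ (hMsymm x y).mp) hM hMunique⟩

/-- **Lemma (Marks–Unger).** Let `G` be a `2`-regular acyclic Borel bipartite graph on a Polish
space `X` with Borel bipartition `{B₀, B₁}`, let `n ≥ 1`, and let `Gₙ` be the graph where
`x Gₙ y` iff there is a `G`-path of odd length at most `2n - 1` from `x` to `y`. If `Y` is a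
`Gₙ`-invariant Borel set such that `Gₙ ↾ Y` has a Borel perfect matching, then `G ↾ Y` has a
Borel perfect matching. -/
theorem two_regular_matching_lemma {X : Type*} [TopologicalSpace X] [PolishSpace X]
    [MeasurableSpace X] [BorelSpace X]
    (G : SimpleGraph X)
    (hGBorel : MeasurableSet {p : X × X | G.Adj p.1 p.2})
    (hreg : ∀ x : X, (G.neighborSet x).ncard = 2)
    (hacyclic : G.IsAcyclic)
    (B₀ B₁ : Set X) (hB₀ : MeasurableSet B₀) (hB₁ : MeasurableSet B₁)
    (hcover : B₀ ∪ B₁ = Set.univ) (hdisj : Disjoint B₀ B₁)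
    (hbip : ∀ x y : X, G.Adj x y → (x ∈ B₀ ∧ y ∈ B₁) ∨ (x ∈ B₁ ∧ y ∈ B₀))
    (n : ℕ) (hn : 1 ≤ n)
    (Gn : SimpleGraph X)
    (hGn : ∀ x y : X, Gn.Adj x y ↔
      ∃ p : G.Walk x y, p.IsPath ∧ Odd p.length ∧ p.length ≤ 2 * n - 1)
    (Y : Set X)
    (hYBorel : MeasurableSet Y)
    (hYinv : ∀ x y : X, Gn.Adj x y → (x ∈ Y ↔ y ∈ Y))
    (hmatchGn : ∃ M : Set (X × X), MeasurableSet M ∧ IsPerfectMatchingOn Gn Y M) :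
    ∃ M : Set (X × X), MeasurableSet M ∧ IsPerfectMatchingOn G Y M :=
  two_regular_matching_lemma_general G hGBorel hreg hacyclic n hn Gn hGn Y hYBorel hYinv hmatchGn
end

section
/- Let a be an action of a group Γ on a set X and let S = {γ₁, …, γₙ} ⊆ Γ be a finite symmetric set. Then the bipartite graph G_p(a, S) has a perfect matching if and only if the action a has a paradoxical decomposition using only group elements from S. -/
open scoped Pointwise

/-- The families `A₁,…,Aₙ, B₁,…,B_m` together with group elements `α₁,…,αₙ, β₁,…,β_m` form a
paradoxical decomposition of the action of `Γ` on `X`. -/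
def IsParadoxicalDecomposition {Γ X : Type*} [Group Γ] [MulAction Γ X]
    {n m : ℕ} (A : Fin n → Set X) (B : Fin m → Set X) (α : Fin n → Γ) (β : Fin m → Γ) : Prop :=
  (∀ i j, i ≠ j → Disjoint (A i) (A j)) ∧
  (∀ i j, i ≠ j → Disjoint (B i) (B j)) ∧
  (∀ i j, Disjoint (A i) (B j)) ∧
  ((⋃ i, A i) ∪ (⋃ j, B j)) = Set.univ ∧
  (∀ i j, i ≠ j → Disjoint (α i • A i) (α j • A j)) ∧
  (∀ i j, i ≠ j → Disjoint (β i • B i) (β j • B j)) ∧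
  (⋃ i, α i • A i) = Set.univ ∧
  (⋃ j, β j • B j) = Set.univ

/-- The edge relation of the bipartite graph `G_p(a, S)` on `{0,1,2} × X`: `(i,x)` and `(j,y)`
are adjacent iff exactly one of `i`, `j` equals `0` and `γ • x = y` for some `γ ∈ S`. -/
def gpAdj {Γ X : Type*} [Group Γ] [MulAction Γ X] (S : Finset Γ)
    (p q : Fin 3 × X) : Prop :=
  Xor' (p.1 = 0) (q.1 = 0) ∧ ∃ γ ∈ S, γ • p.2 = q.2

/-- `M` is a perfect matching of the graph with vertex set `V` and edge relation `G`:
a symmetric set of (ordered) pairs so that every vertex is matched to exactly one vertex. -/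
def IsPerfectMatchingRel {V : Type*} (G : V → V → Prop) (M : Set (V × V)) : Prop :=
  (∀ p ∈ M, G p.1 p.2) ∧
  (∀ x y : V, (x, y) ∈ M ↔ (y, x) ∈ M) ∧
  (∀ x : V, ∃! y : V, (x, y) ∈ M)

private lemma fin3_cases (j : Fin 3) : j = 0 ∨ j = 1 ∨ j = 2 := by
  fin_cases j <;> simp

/-- The graph `G_p(a, S)` has a perfect matching if and only if the action `a` has a
paradoxical decomposition using group elements from `S`. -/
theorem gp_matching_iff_paradoxical {Γ X : Type*} [Group Γ] [MulAction Γ X]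
    (S : Finset Γ) (hsymm : ∀ γ ∈ S, γ⁻¹ ∈ S) :
    (∃ M : Set ((Fin 3 × X) × (Fin 3 × X)), IsPerfectMatchingRel (gpAdj S) M) ↔
    (∃ (n m : ℕ) (A : Fin n → Set X) (B : Fin m → Set X) (α : Fin n → Γ) (β : Fin m → Γ),
      (∀ i, α i ∈ S) ∧ (∀ j, β j ∈ S) ∧ IsParadoxicalDecomposition A B α β) := by
  constructor
  · rintro ⟨M, hadj, hsym, huniq⟩
    choose f hf hfu using huniq
    set e : Fin S.card → Γ := fun i => ((S.equivFin.symm i : {x // x ∈ S}) : Γ) with he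
    have heinj : Function.Injective e := fun i j h =>
      S.equivFin.symm.injective (Subtype.ext h)
    have heS : ∀ i, e i ∈ S := fun i => (S.equivFin.symm i).2
    have hesurj : ∀ γ ∈ S, ∃ i, e i = γ := fun γ hγ =>
      ⟨S.equivFin ⟨γ, hγ⟩, by simp [he]⟩
    have hP1 : ∀ x : X, (f ((0 : Fin 3), x)).1 ≠ 0 := by
      intro x
      have h := (hadj _ (hf ((0 : Fin 3), x))).1
      rcases h with ⟨_, hb⟩ | ⟨_, ha⟩
      · exact hb
      · exact absurd rfl ha
    have hP2 : ∀ x : X, ∃ γ ∈ S, γ • x = (f ((0 : Fin 3), x)).2 :=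
      fun x => (hadj _ (hf ((0 : Fin 3), x))).2
    choose g hgS hg using hP2
    set A : Fin S.card → Set X :=
      fun i => {x | (f ((0 : Fin 3), x)).1 = 1 ∧ g x = e i} with hA
    set B : Fin S.card → Set X :=
      fun i => {x | (f ((0 : Fin 3), x)).1 = 2 ∧ g x = e i} with hB
    have hfeqA : ∀ i x, x ∈ A i → f ((0 : Fin 3), x) = ((1 : Fin 3), e i • x) := by
      intro i x hx
      obtain ⟨h1, h2⟩ := hx
      have h3 : (f ((0 : Fin 3), x)).2 = e i • x := by rw [← hg x, h2]
      exact Prod.ext h1 h3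
    have hfeqB : ∀ i x, x ∈ B i → f ((0 : Fin 3), x) = ((2 : Fin 3), e i • x) := by
      intro i x hx
      obtain ⟨h1, h2⟩ := hx
      have h3 : (f ((0 : Fin 3), x)).2 = e i • x := by rw [← hg x, h2]
      exact Prod.ext h1 h3
    -- uniqueness of preimage: if f (0,x) = (k,y) and f (0,x') = (k,y), then x = x'
    have hback : ∀ (k : Fin 3) (y : X) (x x' : X), f ((0 : Fin 3), x) = (k, y) →
        f ((0 : Fin 3), x') = (k, y) → x = x' := by
      intro k y x x' hx hx'
      have h1 : (((0 : Fin 3), x), ((k, y) : Fin 3 × X)) ∈ M := by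
        have := hf ((0 : Fin 3), x); rwa [hx] at this
      have h1' : (((0 : Fin 3), x'), ((k, y) : Fin 3 × X)) ∈ M := by
        have := hf ((0 : Fin 3), x'); rwa [hx'] at this
      have h2 := (hsym _ _).mp h1
      have h2' := (hsym _ _).mp h1'
      have := (hfu _ _ h2).trans (hfu _ _ h2').symm
      exact congrArg Prod.snd this
    have hrow : ∀ (k : Fin 3) (y : X), k ≠ 0 → ∃ x : X, f ((0 : Fin 3), x) = (k, y) := by
      intro k y hk
      have h := hf (k, y)
      have hadj' := hadj _ h
      have h0 : (f (k, y)).1 = 0 := by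
        rcases hadj'.1 with ⟨ha, _⟩ | ⟨hb, _⟩
        · exact absurd ha hk
        · exact hb
      refine ⟨(f (k, y)).2, ?_⟩
      have h2 : ((((0 : Fin 3)), (f (k, y)).2), (k, y)) ∈ M := by
        have := (hsym (k, y) (f (k, y))).mp h
        rwa [show f (k, y) = ((0 : Fin 3), (f (k, y)).2) from Prod.ext h0 rfl] at this
      exact (hfu _ _ h2).symm
    refine ⟨S.card, S.card, A, B, e, e, heS, heS, ?_, ?_, ?_, ?_, ?_, ?_, ?_, ?_⟩
    · intro i j hij
      rw [Set.disjoint_left]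
      rintro x ⟨_, h2⟩ ⟨_, h2'⟩
      exact hij (heinj (h2 ▸ h2'))
    · intro i j hij
      rw [Set.disjoint_left]
      rintro x ⟨_, h2⟩ ⟨_, h2'⟩
      exact hij (heinj (h2 ▸ h2'))
    · intro i j
      rw [Set.disjoint_left]
      rintro x ⟨h1, _⟩ ⟨h1', _⟩
      rw [h1] at h1'
      exact absurd h1' (by decide)
    · ext x
      simp only [Set.mem_union, Set.mem_iUnion, Set.mem_univ, iff_true, hA, hB,
        Set.mem_setOf_eq]
      obtain ⟨i, hi⟩ := hesurj (g x) (hgS x)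
      rcases fin3_cases (f ((0 : Fin 3), x)).1 with h | h | h
      · exact absurd h (hP1 x)
      · exact Or.inl ⟨i, h, hi.symm⟩
      · exact Or.inr ⟨i, h, hi.symm⟩
    · intro i j hij
      rw [Set.disjoint_left]
      intro y hyi hyj
      obtain ⟨x, hx, hxy⟩ := Set.mem_smul_set.mp hyi
      obtain ⟨x', hx', hxy'⟩ := Set.mem_smul_set.mp hyj
      have e1 : f ((0 : Fin 3), x) = ((1 : Fin 3), y) := by rw [hfeqA i x hx, hxy]
      have e2 : f ((0 : Fin 3), x') = ((1 : Fin 3), y) := by rw [hfeqA j x' hx', hxy']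
      have hxx := hback 1 y x x' e1 e2
      subst hxx
      exact hij (heinj (hx.2 ▸ hx'.2))
    · intro i j hij
      rw [Set.disjoint_left]
      intro y hyi hyj
      obtain ⟨x, hx, hxy⟩ := Set.mem_smul_set.mp hyi
      obtain ⟨x', hx', hxy'⟩ := Set.mem_smul_set.mp hyj
      have e1 : f ((0 : Fin 3), x) = ((2 : Fin 3), y) := by rw [hfeqB i x hx, hxy]
      have e2 : f ((0 : Fin 3), x') = ((2 : Fin 3), y) := by rw [hfeqB j x' hx', hxy']
      have hxx := hback 2 y x x' e1 e2
      subst hxx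
      exact hij (heinj (hx.2 ▸ hx'.2))
    · ext y
      simp only [Set.mem_iUnion, Set.mem_univ, iff_true]
      obtain ⟨x, hx⟩ := hrow 1 y (by decide)
      obtain ⟨i, hi⟩ := hesurj (g x) (hgS x)
      have hxA : x ∈ A i := ⟨by rw [hx], hi.symm⟩
      refine ⟨i, Set.mem_smul_set.mpr ⟨x, hxA, ?_⟩⟩
      rw [hi, hg x, hx]
    · ext y
      simp only [Set.mem_iUnion, Set.mem_univ, iff_true]
      obtain ⟨x, hx⟩ := hrow 2 y (by decide)
      obtain ⟨i, hi⟩ := hesurj (g x) (hgS x)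
      have hxB : x ∈ B i := ⟨by rw [hx], hi.symm⟩
      refine ⟨i, Set.mem_smul_set.mpr ⟨x, hxB, ?_⟩⟩
      rw [hi, hg x, hx]
  · rintro ⟨n, m, A, B, α, β, hαS, hβS, hAd, hBd, hABd, hcov, hAim, hBim, hAu, hBu⟩
    set R : (Fin 3 × X) → (Fin 3 × X) → Prop := fun p q =>
      (∃ i x, x ∈ A i ∧ ((p = ((0 : Fin 3), x) ∧ q = ((1 : Fin 3), α i • x)) ∨
        (p = ((1 : Fin 3), α i • x) ∧ q = ((0 : Fin 3), x)))) ∨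
      (∃ j x, x ∈ B j ∧ ((p = ((0 : Fin 3), x) ∧ q = ((2 : Fin 3), β j • x)) ∨
        (p = ((2 : Fin 3), β j • x) ∧ q = ((0 : Fin 3), x)))) with hR
    have h10 : ¬((1 : Fin 3) = 0) := by decide
    have h20 : ¬((2 : Fin 3) = 0) := by decide
    refine ⟨{pq | R pq.1 pq.2}, ?_, ?_, ?_⟩
    · rintro ⟨p, q⟩ h
      rcases h with ⟨i, x, hx, ⟨hp, hq⟩ | ⟨hp, hq⟩⟩ | ⟨j, x, hx, ⟨hp, hq⟩ | ⟨hp, hq⟩⟩ <;>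
        subst hp <;> subst hq
      · exact ⟨Or.inl ⟨rfl, h10⟩, ⟨α i, hαS i, rfl⟩⟩
      · exact ⟨Or.inr ⟨rfl, h10⟩, ⟨(α i)⁻¹, hsymm _ (hαS i), inv_smul_smul _ _⟩⟩
      · exact ⟨Or.inl ⟨rfl, h20⟩, ⟨β j, hβS j, rfl⟩⟩
      · exact ⟨Or.inr ⟨rfl, h20⟩, ⟨(β j)⁻¹, hsymm _ (hβS j), inv_smul_smul _ _⟩⟩
    · have key : ∀ p q, R p q → R q p := by
        intro p q h
        rcases h with ⟨i, x, hx, ⟨hp, hq⟩ | ⟨hp, hq⟩⟩ | ⟨j, x, hx, ⟨hp, hq⟩ | ⟨hp, hq⟩⟩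
        · exact Or.inl ⟨i, x, hx, Or.inr ⟨hq, hp⟩⟩
        · exact Or.inl ⟨i, x, hx, Or.inl ⟨hq, hp⟩⟩
        · exact Or.inr ⟨j, x, hx, Or.inr ⟨hq, hp⟩⟩
        · exact Or.inr ⟨j, x, hx, Or.inl ⟨hq, hp⟩⟩
      exact fun p q => ⟨key p q, key q p⟩
    · rintro ⟨k, x⟩
      rcases fin3_cases k with hk | hk | hk <;> subst hk
      · -- row 0
        have hx : x ∈ (⋃ i, A i) ∪ ⋃ j, B j := hcov ▸ Set.mem_univ x
        rcases hx with hx | hx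
        · obtain ⟨i, hi⟩ := Set.mem_iUnion.mp hx
          refine ⟨((1 : Fin 3), α i • x), Or.inl ⟨i, x, hi, Or.inl ⟨rfl, rfl⟩⟩, ?_⟩
          rintro w (⟨i', x', hx', ⟨hp, hq⟩ | ⟨hp, _⟩⟩ | ⟨j', x', hx', ⟨hp, hq⟩ | ⟨hp, _⟩⟩)
          · obtain ⟨-, h2⟩ := Prod.mk.injEq .. ▸ hp
            subst h2
            have hii : i' = i := by
              by_contra hne
              exact Set.disjoint_left.mp (hAd i' i hne) hx' hi
            subst hii
            exact hq
          · simp [Prod.ext_iff] at hp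
          · obtain ⟨-, h2⟩ := Prod.mk.injEq .. ▸ hp
            subst h2
            exact absurd hx' (Set.disjoint_left.mp (hABd i j') hi)
          · simp [Prod.ext_iff] at hp
        · obtain ⟨j, hj⟩ := Set.mem_iUnion.mp hx
          refine ⟨((2 : Fin 3), β j • x), Or.inr ⟨j, x, hj, Or.inl ⟨rfl, rfl⟩⟩, ?_⟩
          rintro w (⟨i', x', hx', ⟨hp, hq⟩ | ⟨hp, _⟩⟩ | ⟨j', x', hx', ⟨hp, hq⟩ | ⟨hp, _⟩⟩)
          · obtain ⟨-, h2⟩ := Prod.mk.injEq .. ▸ hp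
            subst h2
            exact absurd hj (Set.disjoint_left.mp (hABd i' j) hx')
          · simp [Prod.ext_iff] at hp
          · obtain ⟨-, h2⟩ := Prod.mk.injEq .. ▸ hp
            subst h2
            have hjj : j' = j := by
              by_contra hne
              exact Set.disjoint_left.mp (hBd j' j hne) hx' hj
            subst hjj
            exact hq
          · simp [Prod.ext_iff] at hp
      · -- row 1
        have hx : x ∈ ⋃ i, α i • A i := hAu ▸ Set.mem_univ x
        obtain ⟨i, hi⟩ := Set.mem_iUnion.mp hx
        obtain ⟨z, hz, hzx⟩ := Set.mem_smul_set.mp hi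
        refine ⟨((0 : Fin 3), z), Or.inl ⟨i, z, hz, Or.inr ⟨by rw [hzx], rfl⟩⟩, ?_⟩
        rintro w (⟨i', x', hx', ⟨hp, _⟩ | ⟨hp, hq⟩⟩ | ⟨j', x', hx', ⟨hp, _⟩ | ⟨hp, _⟩⟩)
        · simp [Prod.ext_iff] at hp
        · obtain ⟨-, h2⟩ := Prod.mk.injEq .. ▸ hp
          have hx'mem : x ∈ α i' • A i' := Set.mem_smul_set.mpr ⟨x', hx', h2.symm⟩
          have hxmem : x ∈ α i • A i := Set.mem_smul_set.mpr ⟨z, hz, hzx⟩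
          have hii : i' = i := by
            by_contra hne
            exact Set.disjoint_left.mp (hAim i' i hne) hx'mem hxmem
          subst hii
          have hxz : x' = z := smul_left_cancel (α i') (h2.symm.trans hzx.symm)
          exact hq.trans (congrArg (fun t => (((0 : Fin 3), t) : Fin 3 × X)) hxz)
        · simp [Prod.ext_iff] at hp
        · simp [Prod.ext_iff] at hp
      · -- row 2
        have hx : x ∈ ⋃ j, β j • B j := hBu ▸ Set.mem_univ x
        obtain ⟨j, hj⟩ := Set.mem_iUnion.mp hx
        obtain ⟨z, hz, hzx⟩ := Set.mem_smul_set.mp hj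
        refine ⟨((0 : Fin 3), z), Or.inr ⟨j, z, hz, Or.inr ⟨by rw [hzx], rfl⟩⟩, ?_⟩
        rintro w (⟨i', x', hx', ⟨hp, _⟩ | ⟨hp, _⟩⟩ | ⟨j', x', hx', ⟨hp, _⟩ | ⟨hp, hq⟩⟩)
        · simp [Prod.ext_iff] at hp
        · simp [Prod.ext_iff] at hp
        · simp [Prod.ext_iff] at hp
        · obtain ⟨-, h2⟩ := Prod.mk.injEq .. ▸ hp
          have hx'mem : x ∈ β j' • B j' := Set.mem_smul_set.mpr ⟨x', hx', h2.symm⟩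
          have hxmem : x ∈ β j • B j := Set.mem_smul_set.mpr ⟨z, hz, hzx⟩
          have hjj : j' = j := by
            by_contra hne
            exact Set.disjoint_left.mp (hBim j' j hne) hx'mem hxmem
          subst hjj
          have hxz : x' = z := smul_left_cancel (β j') (h2.symm.trans hzx.symm)
          exact hq.trans (congrArg (fun t => (((0 : Fin 3), t) : Fin 3 × X)) hxz)
end

section
/- Let a be an action of a group Γ on a set X and let S ⊆ Γ be a finite symmetric set such that the bipartite graph G_p(a, S) satisfies Hall's condition. Let S² = {γδ : γ, δ ∈ S}. Then G_p(a, S²) satisfies Hall_{1,1}: for every finite set F contained in one side of the bipartition of G_p(a, S²), |N_{G_p(a,S²)}(F)| ≥ 2·|F|. -/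
open scoped Pointwise

/-- `N_G(F)`: the set of vertices adjacent to an element of `F` that are not in `F`. -/
def relNbhd {V : Type*} (G : V → V → Prop) (F : Set V) : Set V :=
  {q | q ∉ F ∧ ∃ p ∈ F, G p q}

section aux
variable {Γ X : Type*} [Group Γ] [MulAction Γ X] [DecidableEq X]

lemma mem_fin12' : ∀ i : Fin 3, i ∈ ({1,2} : Finset (Fin 3)) ↔ i ≠ 0 := by decide
lemma mem_fin12 (i : Fin 3) : i ∈ ({1,2} : Finset (Fin 3)) ↔ i ≠ 0 := mem_fin12' i

lemma nbhd_side1 (T : Finset Γ) (F : Finset (Fin 3 × X)) (h : ∀ p ∈ F, p.1 ≠ 0) :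
    relNbhd (gpAdj T) (F : Set (Fin 3 × X))
      = ↑(({0} : Finset (Fin 3)) ×ˢ (T • F.image Prod.snd)) := by
  ext q
  simp only [relNbhd, gpAdj, Set.mem_setOf_eq, Finset.coe_product, Set.mem_prod,
    Finset.mem_coe, Finset.mem_singleton, Finset.mem_smul, Finset.mem_image]
  constructor
  · rintro ⟨-, p, hp, hx, γ, hγ, hγp⟩
    have hp1 := h p hp
    have hq1 : q.1 = 0 := by rcases hx with ⟨_, h2⟩ | ⟨h1, _⟩ <;> tauto
    exact ⟨hq1, γ, hγ, p.2, ⟨p, hp, rfl⟩, hγp⟩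
  · rintro ⟨hq1, γ, hγ, x, ⟨p, hp, rfl⟩, hγx⟩
    refine ⟨fun hqF => h q hqF hq1, p, hp, ?_, γ, hγ, hγx⟩
    exact Or.inr ⟨hq1, h p hp⟩

lemma nbhd_side0 (T : Finset Γ) (F : Finset (Fin 3 × X)) (h : ∀ p ∈ F, p.1 = 0) :
    relNbhd (gpAdj T) (F : Set (Fin 3 × X))
      = ↑(({1,2} : Finset (Fin 3)) ×ˢ (T • F.image Prod.snd)) := by
  ext q
  simp only [relNbhd, gpAdj, Set.mem_setOf_eq, Finset.coe_product, Set.mem_prod,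
    Finset.mem_coe, mem_fin12, Finset.mem_smul, Finset.mem_image]
  constructor
  · rintro ⟨-, p, hp, hx, γ, hγ, hγp⟩
    have hp1 := h p hp
    have hq1 : q.1 ≠ 0 := by rcases hx with ⟨_, h2⟩ | ⟨h1, h2⟩ <;> tauto
    exact ⟨hq1, γ, hγ, p.2, ⟨p, hp, rfl⟩, hγp⟩
  · rintro ⟨hq1, γ, hγ, x, ⟨p, hp, rfl⟩, hγx⟩
    refine ⟨fun hqF => hq1 (h q hqF), p, hp, ?_, γ, hγ, hγx⟩
    exact Or.inl ⟨h p hp, hq1⟩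

lemma image_snd_12 (A : Finset X) :
    (({1,2} : Finset (Fin 3)) ×ˢ A).image Prod.snd = A := by
  ext x
  simp only [Finset.mem_image, Finset.mem_product]
  constructor
  · rintro ⟨p, ⟨-, h⟩, rfl⟩; exact h
  · intro hx; exact ⟨(1, x), ⟨(mem_fin12 1).mpr (by decide), hx⟩, rfl⟩

lemma key_expand (S : Finset Γ)
    (hHall : ∀ F : Finset (Fin 3 × X),
      ((∀ p ∈ F, p.1 = 0) ∨ (∀ p ∈ F, p.1 ≠ 0)) →
      F.card ≤ (relNbhd (gpAdj S) (F : Set (Fin 3 × X))).ncard)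
    (A : Finset X) : 2 * A.card ≤ (S • A).card := by
  have h := hHall (({1,2} : Finset (Fin 3)) ×ˢ A) (Or.inr ?_)
  · rw [nbhd_side1 S _ (fun p hp => ((mem_fin12 p.1).mp (Finset.mem_product.mp hp).1)),
      image_snd_12, Set.ncard_coe_finset, Finset.card_product] at h
    have h12 : ({1,2} : Finset (Fin 3)).card = 2 := by decide
    rw [h12] at h
    simpa [Finset.card_product] using h
  · intro p hp
    exact (mem_fin12 p.1).mp (Finset.mem_product.mp hp).1

end aux

/-- If `G_p(a, S)` satisfies Hall's condition, then `G_p(a, S²)` satisfies `Hall_{1,1}`: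
every finite subset `F` of one side of the bipartition satisfies `|N(F)| ≥ 2|F|`. -/
theorem gp_hall_amplification {Γ X : Type*} [Group Γ] [DecidableEq Γ] [MulAction Γ X]
    (S : Finset Γ) (hsymm : ∀ γ ∈ S, γ⁻¹ ∈ S)
    (hHall : ∀ F : Finset (Fin 3 × X),
      ((∀ p ∈ F, p.1 = 0) ∨ (∀ p ∈ F, p.1 ≠ 0)) →
      F.card ≤ (relNbhd (gpAdj S) (F : Set (Fin 3 × X))).ncard) :
    ∀ F : Finset (Fin 3 × X),
      ((∀ p ∈ F, p.1 = 0) ∨ (∀ p ∈ F, p.1 ≠ 0)) →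
      2 * F.card ≤ (relNbhd (gpAdj (S * S)) (F : Set (Fin 3 × X))).ncard := by
  classical
  intro F hF
  set A : Finset X := F.image Prod.snd with hA
  have hssA : (S * S) • A = S • (S • A) := by
    rw [mul_smul]
  have k1 : 2 * A.card ≤ (S • A).card := key_expand S hHall A
  have k2 : 2 * (S • A).card ≤ (S • (S • A)).card := key_expand S hHall (S • A)
  rcases hF with h0 | h1
  · rw [nbhd_side0 (S * S) F h0, Set.ncard_coe_finset, Finset.card_product]
    have h12 : ({1,2} : Finset (Fin 3)).card = 2 := by decide
    rw [h12, ← hA, hssA]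
    have hFA : F.card = A.card := by
      rw [hA]
      exact (Finset.card_image_of_injOn (fun p hp q hq hpq => by
        exact Prod.ext (by rw [h0 p hp, h0 q hq]) hpq)).symm
    omega
  · rw [nbhd_side1 (S * S) F h1, Set.ncard_coe_finset, Finset.card_product,
      Finset.card_singleton, one_mul, ← hA, hssA]
    have hFA : F.card ≤ 2 * A.card := by
      have hsub : F ⊆ ({1,2} : Finset (Fin 3)) ×ˢ A := by
        intro p hp
        rw [Finset.mem_product, mem_fin12]
        exact ⟨h1 p hp, Finset.mem_image_of_mem _ hp⟩
      have := Finset.card_le_card hsub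
      rw [Finset.card_product] at this
      have h12 : ({1,2} : Finset (Fin 3)).card = 2 := by decide
      rw [h12] at this
      omega
    omega
end

section
/- Let a be an action of a group Γ on a set X and let A, B ⊆ X. Then A and B are a-equidecomposable if and only if there is a finite symmetric set S ⊆ Γ such that the bipartite graph G(a, S, A, B) has a perfect matching. -/
open scoped Pointwise

/-- `A` and `B` are equidecomposable with respect to the action of `Γ` on `X`. -/
def Equidecomposable (Γ : Type*) {X : Type*} [Group Γ] [MulAction Γ X] (A B : Set X) : Prop :=
  ∃ (n : ℕ) (C : Fin n → Set X) (α : Fin n → Γ),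
    (∀ i j, i ≠ j → Disjoint (C i) (C j)) ∧
    (⋃ i, C i) = A ∧
    (∀ i j, i ≠ j → Disjoint (α i • C i) (α j • C j)) ∧
    (⋃ i, α i • C i) = B

/-- The edge relation of the bipartite graph `G(a, S, A, B)` on `({0} × A) ∪ ({1} × B)`:
`(i, x)` and `(j, y)` are adjacent iff `i ≠ j` and `γ • x = y` for some `γ ∈ S`. -/
def gAdj {Γ X : Type*} [Group Γ] [MulAction Γ X] (S : Finset Γ)
    (p q : Fin 2 × X) : Prop :=
  p.1 ≠ q.1 ∧ ∃ γ ∈ S, γ • p.2 = q.2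

/-- `M` is a perfect matching of the graph with vertex set `W` and edge relation `G`. -/
def IsPerfectMatchingRelOn {V : Type*} (G : V → V → Prop) (W : Set V) (M : Set (V × V)) :
    Prop :=
  (∀ p ∈ M, p.1 ∈ W ∧ p.2 ∈ W ∧ G p.1 p.2) ∧
  (∀ x y : V, (x, y) ∈ M ↔ (y, x) ∈ M) ∧
  (∀ x ∈ W, ∃! y : V, (x, y) ∈ M)

/-- Sets `A` and `B` are `a`-equidecomposable if and only if for some finite symmetric
`S ⊆ Γ` the bipartite graph `G(a, S, A, B)` has a perfect matching. -/
theorem equidecomposable_iff_matching {Γ X : Type*} [Group Γ] [MulAction Γ X]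
    (A B : Set X) :
    Equidecomposable Γ A B ↔
    ∃ S : Finset Γ, (∀ γ ∈ S, γ⁻¹ ∈ S) ∧
      ∃ M : Set ((Fin 2 × X) × (Fin 2 × X)),
        IsPerfectMatchingRelOn (gAdj S)
          (({(0 : Fin 2)} ×ˢ A) ∪ ({(1 : Fin 2)} ×ˢ B)) M := by
  classical
  set W : Set (Fin 2 × X) := ({(0 : Fin 2)} ×ˢ A) ∪ ({(1 : Fin 2)} ×ˢ B) with hW
  have hmemW0 : ∀ x : X, ((0 : Fin 2), x) ∈ W ↔ x ∈ A := by
    intro x; simp [hW, Set.mem_prod]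
  have hmemW1 : ∀ x : X, ((1 : Fin 2), x) ∈ W ↔ x ∈ B := by
    intro x; simp [hW, Set.mem_prod]
  constructor
  · rintro ⟨n, C, α, hd, hA, hd', hB⟩
    have hCA : ∀ i, ∀ x ∈ C i, x ∈ A := fun i x hx => hA ▸ Set.mem_iUnion.mpr ⟨i, hx⟩
    have hCB : ∀ i, ∀ x ∈ C i, α i • x ∈ B := fun i x hx =>
      hB ▸ Set.mem_iUnion.mpr ⟨i, Set.smul_mem_smul_set hx⟩
    refine ⟨Finset.univ.image α ∪ Finset.univ.image (fun i => (α i)⁻¹), ?_, ?_⟩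
    · intro γ hγ
      simp only [Finset.mem_union, Finset.mem_image, Finset.mem_univ, true_and] at hγ ⊢
      rcases hγ with ⟨i, rfl⟩ | ⟨i, rfl⟩
      exacts [Or.inr ⟨i, rfl⟩, Or.inl ⟨i, (inv_inv (α i)).symm⟩]
    · refine ⟨{p | ∃ i, ∃ x ∈ C i,
        p = (((0 : Fin 2), x), ((1 : Fin 2), α i • x)) ∨
        p = (((1 : Fin 2), α i • x), ((0 : Fin 2), x))}, ?_, ?_, ?_⟩
      · rintro p ⟨i, x, hx, rfl | rfl⟩
        · refine ⟨(hmemW0 x).mpr (hCA i x hx), (hmemW1 _).mpr (hCB i x hx), ?_, ?_⟩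
          · simp
          · exact ⟨α i, Finset.mem_union_left _
              (Finset.mem_image_of_mem α (Finset.mem_univ i)), rfl⟩
        · refine ⟨(hmemW1 _).mpr (hCB i x hx), (hmemW0 x).mpr (hCA i x hx), ?_, ?_⟩
          · simp
          · exact ⟨(α i)⁻¹, Finset.mem_union_right _
              (Finset.mem_image_of_mem _ (Finset.mem_univ i)), by simp⟩
      · intro x y
        constructor
        · rintro ⟨i, z, hz, h | h⟩
          · injection h with h1 h2
            exact ⟨i, z, hz, Or.inr (Prod.ext h2 h1)⟩
          · injection h with h1 h2
            exact ⟨i, z, hz, Or.inl (Prod.ext h2 h1)⟩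
        · rintro ⟨i, z, hz, h | h⟩
          · injection h with h1 h2
            exact ⟨i, z, hz, Or.inr (Prod.ext h2 h1)⟩
          · injection h with h1 h2
            exact ⟨i, z, hz, Or.inl (Prod.ext h2 h1)⟩
      · rintro v hv
        rcases hv with ⟨h0, ha⟩ | ⟨h1, hb⟩
        · simp only [Set.mem_singleton_iff] at h0
          obtain ⟨i, hi⟩ := Set.mem_iUnion.mp (hA ▸ ha)
          refine ⟨((1 : Fin 2), α i • v.2), ⟨i, v.2, hi, Or.inl ?_⟩, ?_⟩
          · exact Prod.ext (Prod.ext h0 rfl) rfl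
          · rintro y ⟨j, z, hz, h | h⟩
            · injection h with hv1 hy1
              have hz2 : v.2 = z := congrArg Prod.snd hv1
              have hz' : v.2 ∈ C j := hz2 ▸ hz
              have hij : i = j := by
                by_contra hij
                exact (hd i j hij).ne_of_mem hi hz' rfl
              rw [hy1, hij, hz2]
            · injection h with hv1 hy1
              have : v.1 = 1 := congrArg Prod.fst hv1
              rw [h0] at this
              exact absurd this (by simp)
        · simp only [Set.mem_singleton_iff] at h1
          obtain ⟨i, hi⟩ := Set.mem_iUnion.mp (hB ▸ hb)
          obtain ⟨x, hx, hxv⟩ := hi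
          refine ⟨((0 : Fin 2), x), ⟨i, x, hx, Or.inr ?_⟩, ?_⟩
          · exact Prod.ext (Prod.ext h1 hxv.symm) rfl
          · rintro y ⟨j, z, hz, h | h⟩
            · injection h with hv1 hy1
              have : v.1 = 0 := congrArg Prod.fst hv1
              rw [h1] at this
              exact absurd this (by simp)
            · injection h with hv1 hy1
              have hz2 : v.2 = α j • z := congrArg Prod.snd hv1
              have hxv' : α i • x = v.2 := hxv
              have heq : α j • z = α i • x := by rw [← hz2, hxv']
              have hij : i = j := by
                by_contra hij
                exact (hd' i j hij).ne_of_mem (Set.smul_mem_smul_set hx)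
                  (Set.smul_mem_smul_set hz) heq.symm
              have hzx : z = x := by
                rw [hij] at heq
                exact smul_left_cancel _ heq
              rw [hy1, hzx]
  · rintro ⟨S, hSsym, M, hMmem, hMsym, hMuniq⟩
    have hpart : ∀ a : X, ∃ b : X, a ∈ A →
        (((0 : Fin 2), a), ((1 : Fin 2), b)) ∈ M ∧ b ∈ B := by
      intro a
      by_cases ha : a ∈ A
      · obtain ⟨y, hy, -⟩ := hMuniq ((0 : Fin 2), a) ((hmemW0 a).mpr ha)
        obtain ⟨-, hyW, hadj⟩ := hMmem _ hy
        have hy1 : y.1 = 1 := by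
          have h01 : (0 : Fin 2) ≠ y.1 := hadj.1
          omega
        have hyB : y.2 ∈ B := by
          rcases hyW with ⟨h0, -⟩ | ⟨-, hB'⟩
          · simp only [Set.mem_singleton_iff] at h0; omega
          · exact hB'
        exact ⟨y.2, fun _ => ⟨by rwa [← hy1], hyB⟩⟩
      · exact ⟨a, fun h => absurd h ha⟩
    choose f hf using hpart
    have finj : ∀ a ∈ A, ∀ a' ∈ A, f a = f a' → a = a' := by
      intro a ha a' ha' hff
      have h1 := (hf a ha).1
      have h2 := (hf a' ha').1
      rw [hff] at h1
      have hbB : f a' ∈ B := (hf a' ha').2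
      obtain ⟨y, -, hyuniq⟩ := hMuniq ((1 : Fin 2), f a') ((hmemW1 _).mpr hbB)
      have e1 := hyuniq _ ((hMsym _ _).mp h1)
      have e2 := hyuniq _ ((hMsym _ _).mp h2)
      exact (Prod.ext_iff.mp (e1.trans e2.symm)).2
    have hfS : ∀ a ∈ A, ∃ γ ∈ S, γ • a = f a := fun a ha =>
      (hMmem _ (hf a ha).1).2.2.2
    set n := S.card with hn
    set γ : Fin n → Γ := fun i => (S.equivFin.symm i : Γ) with hγ
    have hγsurj : ∀ s ∈ S, ∃ i, γ i = s := fun s hs =>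
      ⟨S.equivFin ⟨s, hs⟩, by simp [hγ]⟩
    set C : Fin n → Set X :=
      fun i => {x | x ∈ A ∧ γ i • x = f x ∧ ∀ j, γ j • x = f x → i ≤ j} with hC
    have hmemC : ∀ a ∈ A, ∃ i, a ∈ C i := by
      intro a ha
      obtain ⟨s, hs, hsa⟩ := hfS a ha
      obtain ⟨i₀, hi₀⟩ := hγsurj s hs
      have hne : (Finset.univ.filter (fun i => γ i • a = f a)).Nonempty :=
        ⟨i₀, Finset.mem_filter.mpr ⟨Finset.mem_univ _, by rw [hi₀, hsa]⟩⟩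
      refine ⟨(Finset.univ.filter (fun i => γ i • a = f a)).min' hne, ha,
        (Finset.mem_filter.mp ((Finset.univ.filter
          (fun i => γ i • a = f a)).min'_mem hne)).2, ?_⟩
      intro j hj
      exact Finset.min'_le _ j (Finset.mem_filter.mpr ⟨Finset.mem_univ _, hj⟩)
    refine ⟨n, C, γ, ?_, ?_, ?_, ?_⟩
    · intro i j hij
      rw [Set.disjoint_left]
      rintro x ⟨-, hxi, hmin_i⟩ ⟨-, hxj, hmin_j⟩
      exact hij (le_antisymm (hmin_i j hxj) (hmin_j i hxi))
    · ext a
      simp only [Set.mem_iUnion]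
      constructor
      · rintro ⟨i, hi, -⟩; exact hi
      · exact hmemC a
    · intro i j hij
      rw [Set.disjoint_left]
      rintro b hbi hbj
      obtain ⟨x, hx, hxb⟩ := hbi
      obtain ⟨y, hy, hyb⟩ := hbj
      have hxb' : γ i • x = b := hxb
      have hyb' : γ j • y = b := hyb
      have hfx : f x = b := by rw [← hx.2.1, hxb']
      have hfy : f y = b := by rw [← hy.2.1, hyb']
      have hxy : x = y := finj x hx.1 y hy.1 (hfx.trans hfy.symm)
      apply hij
      refine le_antisymm (hx.2.2 j ?_) (hy.2.2 i ?_)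
      · rw [hxy]; exact hy.2.1
      · rw [← hxy]; exact hx.2.1
    · ext b
      simp only [Set.mem_iUnion]
      constructor
      · rintro ⟨i, x, hx, rfl⟩
        show (fun y => γ i • y) x ∈ B
        simp only []
        rw [hx.2.1]
        exact (hf x hx.1).2
      · intro hb
        obtain ⟨q, hq, -⟩ := hMuniq ((1 : Fin 2), b) ((hmemW1 b).mpr hb)
        obtain ⟨-, hqW, hadj⟩ := hMmem _ hq
        have hq1 : q.1 = 0 := by
          have h10 : (1 : Fin 2) ≠ q.1 := hadj.1
          omega
        have hqA : q.2 ∈ A := by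
          rcases hqW with ⟨-, hA'⟩ | ⟨h1', -⟩
          · exact hA'
          · simp only [Set.mem_singleton_iff] at h1'; omega
        have hqM : (((0 : Fin 2), q.2), ((1 : Fin 2), b)) ∈ M := by
          have := (hMsym _ _).mp hq
          rwa [show q = ((0 : Fin 2), q.2) from Prod.ext hq1 rfl] at this
        have hfq : f q.2 = b := by
          obtain ⟨y, -, hyuniq⟩ := hMuniq ((0 : Fin 2), q.2) ((hmemW0 _).mpr hqA)
          have e1 := hyuniq _ hqM
          have e2 := hyuniq _ (hf q.2 hqA).1
          exact ((Prod.ext_iff.mp (e2.trans e1.symm)).2)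
        obtain ⟨i, hi⟩ := hmemC q.2 hqA
        refine ⟨i, q.2, hi, ?_⟩
        show γ i • q.2 = b
        rw [hi.2.1, hfq]
end

section
/- Let X be a set and let f₀, f₁, f₂ : X → X be injective functions whose ranges are pairwise disjoint and partition X. Let H be the graph on X generated by f₀, f₁, f₂, i.e., x H y if and only if x ≠ y and fᵢ(x) = y or fᵢ(y) = x for some i ∈ {0, 1, 2}. Then each connected component of H contains at most one cycle. -/
open SimpleGraph

namespace AtMostOneCycleAux

variable {X : Type*}

/-- Every edge of a walk has the form `s(getVert i, getVert (i+1))`. -/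
lemma mem_edges_iff_getVert {H : SimpleGraph X} {a b : X} (p : H.Walk a b) (e : Sym2 X) :
    e ∈ p.edges ↔ ∃ i < p.length, e = s(p.getVert i, p.getVert (i + 1)) := by
  induction p with
  | nil => simp
  | cons h q ih =>
    simp only [SimpleGraph.Walk.edges_cons, List.mem_cons, ih, SimpleGraph.Walk.length_cons]
    constructor
    · rintro (rfl | ⟨i, hi, rfl⟩)
      · exact ⟨0, by omega, by simp [SimpleGraph.Walk.getVert_cons_succ]⟩
      · exact ⟨i + 1, by omega, by simp [SimpleGraph.Walk.getVert_cons_succ]⟩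
    · rintro ⟨i, hi, rfl⟩
      match i with
      | 0 => left; simp [SimpleGraph.Walk.getVert_cons_succ]
      | Nat.succ j =>
        right
        exact ⟨j, by omega, by simp [SimpleGraph.Walk.getVert_cons_succ]⟩

/-- The support of a walk is the list of its `getVert`s. -/
lemma support_eq_map {H : SimpleGraph X} {a b : X} (p : H.Walk a b) :
    p.support = (List.range (p.length + 1)).map p.getVert := by
  induction p with
  | nil => simp [List.range_succ]
  | cons h q ih =>
    conv_rhs => rw [SimpleGraph.Walk.length_cons, List.range_succ_eq_map]
    simp [SimpleGraph.Walk.support_cons, ih, List.map_map, Function.comp_def,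
      SimpleGraph.Walk.getVert_cons_succ]

/-- On a cycle, the vertices `getVert 1, …, getVert n` are pairwise distinct. -/
lemma cycle_getVert_injOn {H : SimpleGraph X} {x : X} {c : H.Walk x x} (hc : c.IsCycle)
    {i j : ℕ} (hi1 : 1 ≤ i) (hin : i ≤ c.length) (hj1 : 1 ≤ j) (hjn : j ≤ c.length)
    (hij : c.getVert i = c.getVert j) : i = j := by
  have hnd : c.support.tail.Nodup := hc.2
  rw [support_eq_map, List.range_succ_eq_map, List.map_cons, List.tail_cons,
    List.map_map] at hnd
  have := List.inj_on_of_nodup_map hnd (x := i - 1) (y := j - 1)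
    (by simp; omega) (by simp; omega)
  simp only [Function.comp_apply] at this
  have h1 : i - 1 + 1 = i := by omega
  have h2 : j - 1 + 1 = j := by omega
  have := this (by rw [Nat.succ_eq_add_one, Nat.succ_eq_add_one, h1, h2]; exact hij)
  omega

/-- Iterates mod a period. -/
lemma iterate_mod {g : X → X} {x : X} {n : ℕ} (hper : g^[n] x = x) (k : ℕ) :
    g^[k] x = g^[k % n] x := by
  conv_lhs => rw [← Nat.mod_add_div k n, Function.iterate_add_apply]
  congr 1
  rw [Function.iterate_mul]
  exact Function.iterate_fixed hper _

/-- Orbit of a periodic point through a point of its orbit. -/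
lemma orbit_eq_of_mem {g : X → X} {x z : X} {n : ℕ} (hn : 0 < n) (hper : g^[n] x = x)
    (hz : ∃ a, g^[a] x = z) :
    Set.range (fun k => g^[k] z) = Set.range (fun k => g^[k] x) := by
  obtain ⟨a, rfl⟩ := hz
  ext w
  constructor
  · rintro ⟨k, rfl⟩
    refine ⟨k + a, ?_⟩
    show g^[k + a] x = g^[k] (g^[a] x)
    rw [Function.iterate_add_apply]
  · rintro ⟨k, rfl⟩
    refine ⟨k + (n - a % n), ?_⟩
    show g^[k + (n - a % n)] (g^[a] x) = g^[k] x
    rw [← Function.iterate_add_apply]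
    have h1 : g^[k + (n - a % n) + a] x = g^[(k + (n - a % n) + a) % n] x :=
      iterate_mod hper _
    have h2 : g^[k] x = g^[k % n] x := iterate_mod hper _
    rw [h1, h2]
    congr 1
    have ha : a % n < n := Nat.mod_lt _ hn
    have hmd := Nat.mod_add_div a n
    have hmul : n * (a / n + 1) = n * (a / n) + n := by ring
    have e : k + (n - a % n) + a = k + n * (a / n + 1) := by omega
    rw [e, Nat.add_mul_mod_self_left]

/-- A walk whose steps all follow `g` forward: characterization of its edges. -/
lemma forward_walk_spec {H : SimpleGraph X} {g : X → X} {x : X} (c : H.Walk x x)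
    (hpos : 0 < c.length)
    (hF : ∀ i < c.length, g (c.getVert i) = c.getVert (i + 1)) :
    g^[c.length] x = x ∧
      (∀ e : Sym2 X, e ∈ c.edges ↔
        ∃ v ∈ Set.range (fun k => g^[k] x), e = s(v, g v)) := by
  have hiter : ∀ i ≤ c.length, c.getVert i = g^[i] x := by
    intro i hi
    induction i with
    | zero => simp
    | succ j ih =>
      rw [Function.iterate_succ_apply', ← ih (by omega), ← hF j (by omega)]
  have hper : g^[c.length] x = x := by
    rw [← hiter c.length le_rfl, SimpleGraph.Walk.getVert_length]
  refine ⟨hper, fun e => ?_⟩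
  rw [mem_edges_iff_getVert]
  constructor
  · rintro ⟨i, hi, rfl⟩
    refine ⟨c.getVert i, ⟨i, (hiter i (by omega)).symm⟩, ?_⟩
    rw [hF i hi]
  · rintro ⟨v, ⟨k, rfl⟩, rfl⟩
    refine ⟨k % c.length, Nat.mod_lt _ hpos, ?_⟩
    rw [hiter (k % c.length) (le_of_lt (Nat.mod_lt _ hpos)),
      hiter (k % c.length + 1) (by have := Nat.mod_lt k hpos; omega),
      ← iterate_mod hper k, Function.iterate_succ_apply', ← iterate_mod hper k]

/-- A cycle is either all-forward or its reverse is all-forward. -/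
lemma cycle_direction {H : SimpleGraph X} {g : X → X}
    (hAdj : ∀ u v, H.Adj u v → g u = v ∨ g v = u)
    {x : X} {c : H.Walk x x} (hc : c.IsCycle) :
    (∀ i < c.length, g (c.getVert i) = c.getVert (i + 1)) ∨
      (∀ i < c.reverse.length, g (c.reverse.getVert i) = c.reverse.getVert (i + 1)) := by
  set n := c.length with hn
  have hn3 : 3 ≤ n := hc.three_le_length
  set v : ℕ → X := c.getVert with hv
  have hvn : v n = x := c.getVert_length
  have hv0 : v 0 = x := c.getVert_zero
  have hedge : ∀ i < n, g (v i) = v (i + 1) ∨ g (v (i + 1)) = v i := by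
    intro i hi
    exact hAdj _ _ (c.adj_getVert_succ hi)
  -- B i := g (v (i+1)) = v i ; B propagates cyclically
  have hBstep : ∀ i < n, g (v (i + 1)) = v i → g (v ((i + 1) % n + 1)) = v ((i + 1) % n) := by
    intro i hi hB
    by_cases hcase : i + 1 < n
    · rw [Nat.mod_eq_of_lt hcase]
      rcases hedge (i + 1) hcase with hF | hB'
      · exfalso
        -- g (v (i+1)) = v (i+2) and = v i, so v i = v (i+2)
        have heq : v i = v (i + 2) := by rw [← hB, hF]
        rcases Nat.eq_zero_or_pos i with rfl | hipos
        · -- v 0 = v n, so v n = v 2 with n ≥ 3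
          have : v n = v 2 := by rw [hvn, ← hv0, heq]
          have := cycle_getVert_injOn hc (by omega) le_rfl (by omega) (by omega) this
          omega
        · have := cycle_getVert_injOn hc (by omega) (by omega) (by omega) (by omega) heq
          omega
      · exact hB'
    · -- i + 1 = n : wraparound
      have hin : i + 1 = n := by omega
      rw [hin, Nat.mod_self]
      rcases hedge 0 (by omega) with hF | hB'
      · exfalso
        -- g (v 0) = v 1 and g (v 0) = g (v n) = v (n-1)
        have h1 : g (v 0) = v i := by rw [hv0, ← hvn, ← hin]; exact hB
        have heq : v 1 = v i := by rw [← hF, h1]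
        have := cycle_getVert_injOn hc le_rfl (by omega) (by omega) (by omega) heq
        omega
      · simpa using hB'
  by_cases hB : ∃ j < n, g (v (j + 1)) = v j
  · right
    obtain ⟨j, hj, hBj⟩ := hB
    have hall : ∀ m, g (v ((j + m) % n + 1)) = v ((j + m) % n) := by
      intro m
      induction m with
      | zero => simpa [Nat.mod_eq_of_lt hj] using hBj
      | succ m ih =>
        have hm : (j + m) % n < n := Nat.mod_lt _ (by omega)
        have := hBstep _ hm ih
        have harith : ((j + m) % n + 1) % n = (j + (m + 1)) % n := by
          conv_rhs => rw [show j + (m + 1) = (j + m) + 1 by omega]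
          rw [Nat.add_mod (j + m) 1 n, Nat.mod_eq_of_lt (show 1 < n by omega)]
        rwa [harith] at this
    have hallB : ∀ k < n, g (v (k + 1)) = v k := by
      intro k hk
      have := hall ((n - j) + k)
      have harith : (j + ((n - j) + k)) % n = k := by
        have : j + ((n - j) + k) = n + k := by omega
        rw [this, Nat.add_mod_left, Nat.mod_eq_of_lt hk]
      rwa [harith] at this
    intro i hi
    have hlr : c.reverse.length = c.length := SimpleGraph.Walk.length_reverse c
    have hi' : i < n := by first | exact hi | (rw [hlr] at hi; exact hi)
    rw [SimpleGraph.Walk.getVert_reverse, SimpleGraph.Walk.getVert_reverse]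
    have hk : n - (i + 1) < n := by omega
    have hB1 := hallB (n - (i + 1)) hk
    have h1 : n - (i + 1) + 1 = n - i := by omega
    rw [h1] at hB1
    exact hB1
  · left
    push_neg at hB
    intro i hi
    rcases hedge i hi with hF | hB'
    · exact hF
    · exact absurd hB' (hB i hi)

/-- Main abstract lemma. -/
lemma key {H : SimpleGraph X} {g : X → X}
    (hAdj : ∀ u v, H.Adj u v → g u = v ∨ g v = u) :
    ∀ (x y : X) (c : H.Walk x x) (c' : H.Walk y y),
      c.IsCycle → c'.IsCycle → H.Reachable x y →
      (∀ e : Sym2 X, e ∈ c.edges ↔ e ∈ c'.edges) := by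
  -- For each cycle, produce period + edge characterization via the orbit
  have main : ∀ (x : X) (c : H.Walk x x), c.IsCycle →
      ∃ n : ℕ, 0 < n ∧ g^[n] x = x ∧
        (∀ e : Sym2 X, e ∈ c.edges ↔
          ∃ v ∈ Set.range (fun k => g^[k] x), e = s(v, g v)) := by
    intro x c hc
    have h3 : 3 ≤ c.length := hc.three_le_length
    rcases cycle_direction hAdj hc with hF | hF
    · obtain ⟨hper, hedges⟩ := forward_walk_spec c (by omega) hF
      exact ⟨c.length, by omega, hper, hedges⟩
    · obtain ⟨hper, hedges⟩ := forward_walk_spec c.reverse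
        (by rw [SimpleGraph.Walk.length_reverse]; omega) hF
      refine ⟨c.reverse.length, by rw [SimpleGraph.Walk.length_reverse]; omega, hper, ?_⟩
      intro e
      rw [← hedges e, SimpleGraph.Walk.edges_reverse, List.mem_reverse]
  intro x y c c' hc hc' hr e
  obtain ⟨n, hn, hxper, hxedges⟩ := main x c hc
  obtain ⟨m, hm, hyper, hyedges⟩ := main y c' hc'
  -- reachability gives intersecting orbits
  have hreach : ∃ k l, g^[k] y = g^[l] x := by
    obtain ⟨w⟩ := hr
    have step : ∀ {a b : X}, H.Walk a b → (∃ k l, g^[k] a = g^[l] x) →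
        (∃ k l, g^[k] b = g^[l] x) := by
      intro a b w
      induction w with
      | nil => exact id
      | cons h p ih =>
        rintro ⟨k, l, hkl⟩
        apply ih
        rcases hAdj _ _ h with hgu | hgv
        · -- g a = next
          refine ⟨k, l + 1, ?_⟩
          rw [← hgu, ← Function.iterate_succ_apply, Function.iterate_succ_apply', hkl]
          exact (Function.iterate_succ_apply' g l x).symm
        · -- g next = a
          exact ⟨k + 1, l, by
            rw [Function.iterate_add_apply, Function.iterate_one, hgv, hkl]⟩
    exact step w ⟨0, 0, rfl⟩
  obtain ⟨k, l, hkl⟩ := hreach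
  -- the common point z
  have horb : Set.range (fun k => g^[k] x) = Set.range (fun k => g^[k] y) := by
    have h1 := orbit_eq_of_mem (z := g^[l] x) hn hxper ⟨l, rfl⟩
    have h2 := orbit_eq_of_mem (z := g^[l] x) hm hyper ⟨k, hkl⟩
    rw [← h1, ← h2]
  rw [hxedges, hyedges, horb]

end AtMostOneCycleAux

/-- Suppose `f₀, f₁, f₂ : X → X` are injective functions whose ranges are pairwise disjoint
and partition `X`, and let `H` be the graph they generate (`x H y` iff `x ≠ y` and
`fᵢ x = y` or `fᵢ y = x` for some `i`). Then each connected component of `H` contains at most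
one cycle: any two cycles based in the same connected component have the same edges. -/
theorem at_most_one_cycle_per_component {X : Type*} (f : Fin 3 → X → X)
    (hinj : ∀ i, Function.Injective (f i))
    (hdisj : ∀ i j, i ≠ j → Disjoint (Set.range (f i)) (Set.range (f j)))
    (hcover : (⋃ i, Set.range (f i)) = Set.univ)
    (H : SimpleGraph X)
    (hH : H = SimpleGraph.fromRel (fun x y => ∃ i : Fin 3, f i x = y)) :
    ∀ (x y : X) (c : H.Walk x x) (c' : H.Walk y y),
      c.IsCycle → c'.IsCycle → H.Reachable x y →
      (∀ e : Sym2 X, e ∈ c.edges ↔ e ∈ c'.edges) := by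
  -- Every element has a (unique) preimage under some fᵢ; call it g.
  have hex : ∀ x : X, ∃ (i : Fin 3) (u : X), f i u = x := by
    intro x
    have : x ∈ ⋃ i, Set.range (f i) := by rw [hcover]; trivial
    obtain ⟨s, ⟨i, rfl⟩, hx⟩ := this
    obtain ⟨u, hu⟩ := hx
    exact ⟨i, u, hu⟩
  choose I g hIg using hex
  have guniq : ∀ (i : Fin 3) (u : X), g (f i u) = u := by
    intro i u
    have h := hIg (f i u)
    by_cases hii : I (f i u) = i
    · rw [hii] at h
      exact hinj i h
    · exfalso
      have hmem1 : f i u ∈ Set.range (f (I (f i u))) := ⟨g (f i u), h⟩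
      have hmem2 : f i u ∈ Set.range (f i) := ⟨u, rfl⟩
      exact Set.disjoint_left.mp (hdisj _ _ hii) hmem1 hmem2
  have hAdj : ∀ u v, H.Adj u v → g u = v ∨ g v = u := by
    intro u v huv
    rw [hH, SimpleGraph.fromRel_adj] at huv
    rcases huv.2 with ⟨i, hi⟩ | ⟨i, hi⟩
    · right; rw [← hi, guniq]
    · left; rw [← hi, guniq]
  exact AtMostOneCycleAux.key hAdj
end
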